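/- arXiv:1508.01000 — 7 statements merged into one kernel-verified Lean document; each statement's English description precedes it below -/
import Mathlib

section
/- Let n, p ≥ 1, let b₀, b₁, …, b_p ∈ ℝⁿ, and let l_i ∈ ℝ ∪ {−∞}, u_i ∈ ℝ ∪ {+∞} with l_i ≤ u_i for i = 1, …, p. Suppose that either the rank of the n × p matrix [b₁, …, b_p] is at most n − 1, or p = n. Then for every x* ∈ ℝⁿ: x* is a global maximizer of the problem (U): maximize xᵀx + b₀ᵀx over x ∈ ℝⁿ subject to l_i ≤ xᵀx + 2 b_iᵀx ≤ u_i for i = 1, …, p, if and only if the pair (x*, x*ᵀx*) is a global maximizer of the second-order cone relaxation (S): maximize t + b₀ᵀx over (x, t) ∈ ℝⁿ × ℝ subject to l_i ≤ t + 2 b_iᵀx ≤ u_i for i = 1, …, p and xᵀx ≤ t. -/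
open Matrix

private lemma dot_self_pos {n : ℕ} {w : Fin n → ℝ} (hw : w ≠ 0) : 0 < w ⬝ᵥ w := by
  have h0 : 0 ≤ w ⬝ᵥ w := Finset.sum_nonneg fun i _ => mul_self_nonneg _
  rcases h0.lt_or_eq with h | h
  · exact h
  · exact absurd (dotProduct_self_eq_zero.mp h.symm) hw

private lemma exists_const_dir {n p : ℕ} (hn : 1 ≤ n) (hp : 1 ≤ p)
    (b : Fin p → Fin n → ℝ)
    (hcond : (Matrix.of fun (i : Fin n) (j : Fin p) => b j i).rank ≤ n - 1 ∨ p = n) :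
    ∃ (w : Fin n → ℝ) (κ : ℝ), w ≠ 0 ∧ ∀ i, b i ⬝ᵥ w = κ := by
  set M : Matrix (Fin n) (Fin p) ℝ := Matrix.of fun i j => b j i with hM
  by_cases hr : M.rank ≤ n - 1
  · -- kernel of Mᵀ.mulVecLin is nontrivial
    have hrt : (Mᵀ).rank = M.rank := Matrix.rank_transpose M
    have hkey := LinearMap.finrank_range_add_finrank_ker (Mᵀ).mulVecLin
    rw [Module.finrank_fin_fun] at hkey
    have hrange : Module.finrank ℝ (LinearMap.range (Mᵀ).mulVecLin) = (Mᵀ).rank := rfl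
    have hker : 0 < Module.finrank ℝ (LinearMap.ker (Mᵀ).mulVecLin) := by omega
    obtain ⟨⟨d, hdmem⟩, hd0⟩ := Module.finrank_pos_iff_exists_ne_zero.mp hker
    refine ⟨d, 0, ?_, ?_⟩
    · intro h; exact hd0 (by simp [h])
    · intro i
      have := congrFun (LinearMap.mem_ker.mp hdmem) i
      simpa [Matrix.mulVecLin_apply, Matrix.mulVec, Matrix.vecMul, dotProduct, hM,
        Matrix.transpose_apply, Matrix.of_apply, mul_comm] using this
  · -- full rank square case
    have hpn : p = n := hcond.resolve_left hr
    subst hpn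
    have hrk : M.rank = p := le_antisymm (M.rank_le_card_width.trans (by simp)) (by omega)
    have hrt : (Mᵀ).rank = p := by rw [Matrix.rank_transpose]; exact hrk
    have hrange : LinearMap.range (Mᵀ).mulVecLin = ⊤ :=
      Submodule.eq_top_of_finrank_eq (by rw [Module.finrank_fin_fun]; exact hrt)
    have hmem : (fun _ => (1 : ℝ)) ∈ LinearMap.range (Mᵀ).mulVecLin := by
      rw [hrange]; trivial
    obtain ⟨w, hw⟩ := hmem
    have hbw : ∀ i, b i ⬝ᵥ w = 1 := by
      intro i
      have := congrFun hw i
      simpa [Matrix.mulVecLin_apply, Matrix.mulVec, Matrix.vecMul, dotProduct, hM,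
        Matrix.transpose_apply, Matrix.of_apply, mul_comm] using this
    refine ⟨w, 1, ?_, hbw⟩
    intro h
    have := hbw ⟨0, hp⟩
    rw [h] at this
    simp [dotProduct] at this

private lemma quad_root (a bb s e : ℝ) (ha : 0 < a) (hs : 0 ≤ s) :
    ∃ c : ℝ, a * c ^ 2 + 2 * bb * c = s ∧ 0 ≤ c * e := by
  set r := Real.sqrt (bb ^ 2 + a * s) with hrdef
  have hr2 : r ^ 2 = bb ^ 2 + a * s := Real.sq_sqrt (by positivity)
  have hrb : |bb| ≤ r := by
    rw [← Real.sqrt_sq_eq_abs, hrdef]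
    exact Real.sqrt_le_sqrt (by nlinarith)
  have h1 : bb ≤ r := (le_abs_self bb).trans hrb
  have h2 : -bb ≤ r := (neg_le_abs bb).trans hrb
  rcases le_or_gt 0 e with he | he
  · refine ⟨(-bb + r) / a, ?_, ?_⟩
    · field_simp
      nlinarith [hr2]
    · exact mul_nonneg (div_nonneg (by linarith) ha.le) he
  · refine ⟨(-bb - r) / a, ?_, ?_⟩
    · field_simp
      nlinarith [hr2]
    · have hc : (-bb - r) / a ≤ 0 := div_nonpos_of_nonpos_of_nonneg (by linarith) ha.le
      nlinarith

/-- equivalence of global maximizers of the uniform quadratic problem (U)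
and its SOCP relaxation (S), under the rank condition or `p = n`. -/
theorem stmt0 (n p : ℕ) (hn : 1 ≤ n) (hp : 1 ≤ p)
    (b0 : Fin n → ℝ) (b : Fin p → Fin n → ℝ)
    (l : Fin p → EReal) (u : Fin p → EReal)
    (hl : ∀ i, l i ≠ ⊤) (hu : ∀ i, u i ≠ ⊥) (hlu : ∀ i, l i ≤ u i)
    (hcond : (Matrix.of fun (i : Fin n) (j : Fin p) => b j i).rank ≤ n - 1 ∨ p = n)
    (xs : Fin n → ℝ) :
    ((∀ i, l i ≤ ((xs ⬝ᵥ xs + 2 * (b i ⬝ᵥ xs) : ℝ) : EReal) ∧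
        ((xs ⬝ᵥ xs + 2 * (b i ⬝ᵥ xs) : ℝ) : EReal) ≤ u i) ∧
      (∀ x : Fin n → ℝ,
        (∀ i, l i ≤ ((x ⬝ᵥ x + 2 * (b i ⬝ᵥ x) : ℝ) : EReal) ∧
            ((x ⬝ᵥ x + 2 * (b i ⬝ᵥ x) : ℝ) : EReal) ≤ u i) →
        x ⬝ᵥ x + b0 ⬝ᵥ x ≤ xs ⬝ᵥ xs + b0 ⬝ᵥ xs)) ↔
    (((∀ i, l i ≤ ((xs ⬝ᵥ xs + 2 * (b i ⬝ᵥ xs) : ℝ) : EReal) ∧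
        ((xs ⬝ᵥ xs + 2 * (b i ⬝ᵥ xs) : ℝ) : EReal) ≤ u i) ∧ xs ⬝ᵥ xs ≤ xs ⬝ᵥ xs) ∧
      (∀ (x : Fin n → ℝ) (t : ℝ),
        ((∀ i, l i ≤ ((t + 2 * (b i ⬝ᵥ x) : ℝ) : EReal) ∧
            ((t + 2 * (b i ⬝ᵥ x) : ℝ) : EReal) ≤ u i) ∧ x ⬝ᵥ x ≤ t) →
        t + b0 ⬝ᵥ x ≤ xs ⬝ᵥ xs + b0 ⬝ᵥ xs)) := by
  constructor
  · rintro ⟨hfeas, hopt⟩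
    refine ⟨⟨hfeas, le_refl _⟩, ?_⟩
    rintro x t ⟨hxt, hxx⟩
    obtain ⟨w, κ, hw, hbw⟩ := exists_const_dir hn hp b hcond
    have ha : 0 < w ⬝ᵥ w := dot_self_pos hw
    obtain ⟨c, hceq, hcsgn⟩ :=
      quad_root (w ⬝ᵥ w) (x ⬝ᵥ w + κ) (t - x ⬝ᵥ x) (b0 ⬝ᵥ w - 2 * κ) ha (by linarith)
    set y : Fin n → ℝ := x + c • w with hy
    have hyy : y ⬝ᵥ y = x ⬝ᵥ x + 2 * c * (x ⬝ᵥ w) + c ^ 2 * (w ⬝ᵥ w) := by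
      simp [hy, add_dotProduct, dotProduct_add, smul_dotProduct,
        dotProduct_smul, dotProduct_comm w x, smul_eq_mul]
      ring
    have hby : ∀ i, b i ⬝ᵥ y = b i ⬝ᵥ x + c * κ := by
      intro i
      simp [hy, dotProduct_add, dotProduct_smul, hbw i, smul_eq_mul]
    have hb0y : b0 ⬝ᵥ y = b0 ⬝ᵥ x + c * (b0 ⬝ᵥ w) := by
      simp [hy, dotProduct_add, dotProduct_smul, smul_eq_mul]
    have hkey : ∀ i, y ⬝ᵥ y + 2 * (b i ⬝ᵥ y) = t + 2 * (b i ⬝ᵥ x) := by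
      intro i
      rw [hyy, hby i]
      nlinarith [hceq]
    have hyfeas : ∀ i, l i ≤ ((y ⬝ᵥ y + 2 * (b i ⬝ᵥ y) : ℝ) : EReal) ∧
        ((y ⬝ᵥ y + 2 * (b i ⬝ᵥ y) : ℝ) : EReal) ≤ u i := by
      intro i
      rw [hkey i]
      exact hxt i
    have hle := hopt y hyfeas
    have hobj : t + b0 ⬝ᵥ x ≤ y ⬝ᵥ y + b0 ⬝ᵥ y := by
      rw [hyy, hb0y]
      nlinarith [hceq, hcsgn]
    linarith
  · rintro ⟨⟨hfeas, _⟩, hopt⟩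
    exact ⟨hfeas, fun x hx => hopt x (x ⬝ᵥ x) ⟨hx, le_refl _⟩⟩
end

section
/- Let n, m, p ≥ 1; for j = 1, …, m let Q_j ∈ ℝⁿˣⁿ be symmetric positive semidefinite, and for i = 0, 1, …, p let a_{ij} ∈ {−1, 0, 1}, b_i ∈ ℝⁿ, c_i ∈ ℝ, and g_i(x) = Σ_{j=1}^m a_{ij} xᵀQ_j x + 2 b_iᵀx + c_i. Let J = { j ∈ {1, …, m} : a_{ij} = −1 for some i ∈ {0, 1, …, p} }, and consider (QCQP₁): minimize g₀(x) over x ∈ ℝⁿ subject to g_i(x) ≤ 0 for i = 1, …, p, together with its relaxation (CR): minimize Σ_{j∉J} a_{0j} xᵀQ_j x + Σ_{j∈J} a_{0j} t_j + 2 b₀ᵀx + c₀ over x ∈ ℝⁿ and (t_j)_{j∈J} ∈ ℝᴶ, subject to Σ_{j∉J} a_{ij} xᵀQ_j x + Σ_{j∈J} a_{ij} t_j + 2 b_iᵀx + c_i ≤ 0 for i = 1, …, p, and xᵀQ_j x ≤ t_j for each j ∈ J. Suppose that for every j ∈ J, the dimension of the linear span of span{b₁, …, b_p} ∪ N(Q_j)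 ∪ ⋃_{i ∈ {1,…,m}, i ≠ j} R(Q_i) is at most n − 1, and that the optimal value of (CR) is > −∞. Then (QCQP₁) and (CR) are equivalent: x* is a global minimizer of (QCQP₁) if and only if (x*, (x*ᵀQ_j x*)_{j∈J}) is a global minimizer of (CR). -/
/-!
Every (QCQP₁)-feasible `x` gives the (CR)-feasible point `(x, (xᵀ Q_j x)_j)` with the same
value, so it suffices to turn a (CR)-feasible `(x, t)` into a (QCQP₁)-feasible `x'` with no
larger value. The dimension bound for `j ∈ J` yields a vector `d_j ≠ 0` orthogonal to every
`b_i`, to `N(Q_j)` and to every `R(Q_k)`, `k ≠ j`; hence `Q_k d_j = 0` for `k ≠ j` while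
`d_jᵀ Q_j d_j > 0`. Moving `x` along `d_j` therefore leaves all linear terms `b_iᵀ x` and all
forms `xᵀ Q_k x`, `k ≠ j`, unchanged, and the step `s_j` can be chosen as a root of the
quadratic `s ↦ (x + s d_j)ᵀ Q_j (x + s d_j) - t_j` (which is `≤ 0` at `s = 0`) on the side where
`s_j b₀ᵀ d_j ≤ 0`. Then `x' = x + Σ_j s_j d_j` satisfies `x'ᵀ Q_j x' = t_j` for `j ∈ J`, so its
constraint values agree with those of `(x, t)` and its objective is smaller by
`-2 Σ_j s_j b₀ᵀ d_j ≥ 0`.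
-/

open Matrix

noncomputable section

/-- The quadratic form `xᵀ M x`. -/
def qf {n : ℕ} (M : Matrix (Fin n) (Fin n) ℝ) (x : Fin n → ℝ) : ℝ := x ⬝ᵥ (M *ᵥ x)

lemma exists_nonneg_quadratic_root {α β γ : ℝ} (hα : 0 < α) (hγ : γ ≤ 0) :
    ∃ r, 0 ≤ r ∧ α * r ^ 2 + β * r + γ = 0 := by
  have hD : β ^ 2 ≤ discrim α β γ := by rw [discrim]; nlinarith
  set s := √(discrim α β γ)
  have hβs : β ≤ s := (le_abs_self β).trans (Real.abs_le_sqrt hD)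
  refine ⟨(-β + s) / (2 * α), div_nonneg (by linarith) (by positivity), ?_⟩
  rw [sq, quadratic_eq_zero_iff hα.ne' (Real.mul_self_sqrt ((sq_nonneg β).trans hD)).symm]
  exact Or.inl rfl

lemma exists_quadratic_root_mul_nonpos {α β γ : ℝ} (σ : ℝ) (hα : 0 < α) (hγ : γ ≤ 0) :
    ∃ s, α * s ^ 2 + β * s + γ = 0 ∧ σ * s ≤ 0 := by
  rcases le_total σ 0 with hσ | hσ
  · obtain ⟨r, hr, hroot⟩ := exists_nonneg_quadratic_root (β := β) hα hγ
    exact ⟨r, hroot, mul_nonpos_of_nonpos_of_nonneg hσ hr⟩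
  · obtain ⟨r, hr, hroot⟩ := exists_nonneg_quadratic_root (β := -β) hα hγ
    exact ⟨-r, by linear_combination hroot, by nlinarith⟩

lemma Submodule.exists_ne_zero_forall_dotProduct_eq_zero {ι : Type*} [Fintype ι]
    [DecidableEq ι] {W : Submodule ℝ (ι → ℝ)} (hW : W ≠ ⊤) :
    ∃ d ≠ 0, ∀ w ∈ W, w ⬝ᵥ d = 0 := by
  obtain ⟨f, hf, hWf⟩ := W.exists_le_ker_of_lt_top hW.lt_top
  refine ⟨(dotProductEquiv ℝ ι).symm f, by simpa using hf, fun w hw => ?_⟩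
  rw [dotProduct_comm, ← dotProductEquiv_apply_apply, LinearEquiv.apply_symm_apply]
  exact hWf hw

lemma Matrix.IsHermitian.dotProduct_mulVec_comm {ι : Type*} [Fintype ι] {M : Matrix ι ι ℝ}
    (hM : M.IsHermitian) (x y : ι → ℝ) : x ⬝ᵥ (M *ᵥ y) = y ⬝ᵥ (M *ᵥ x) := by
  rw [dotProduct_mulVec, ← mulVec_transpose, ← conjTranspose_eq_transpose_of_trivial, hM,
    dotProduct_comm]

section QuadraticForm

variable {n : ℕ} {M : Matrix (Fin n) (Fin n) ℝ}

lemma qf_add_smul (hM : M.IsHermitian) (x d : Fin n → ℝ) (s : ℝ) :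
    qf M (x + s • d) = qf M d * s ^ 2 + 2 * (d ⬝ᵥ (M *ᵥ x)) * s + qf M x := by
  simp only [qf, mulVec_add, mulVec_smul, dotProduct_add, add_dotProduct, dotProduct_smul,
    smul_dotProduct, smul_eq_mul, hM.dotProduct_mulVec_comm x d]
  ring

lemma qf_add_of_mulVec_eq_zero (hM : M.IsHermitian) (x : Fin n → ℝ) {v : Fin n → ℝ}
    (hv : M *ᵥ v = 0) : qf M (x + v) = qf M x := by
  simp only [qf, mulVec_add, hv, add_zero, add_dotProduct, hM.dotProduct_mulVec_comm v x,
    dotProduct_zero]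

end QuadraticForm

section Lifting

variable {n : ℕ} {ι κ : Type*} (Q : κ → Matrix (Fin n) (Fin n) ℝ) (b : ι → Fin n → ℝ)

structure IsIsolatingDirection (j : κ) (d : Fin n → ℝ) : Prop where
  dotProduct_eq_zero : ∀ i, b i ⬝ᵥ d = 0
  mulVec_eq_zero : ∀ k ≠ j, Q k *ᵥ d = 0
  qf_pos : 0 < qf (Q j) d

variable {Q b}

lemma exists_isIsolatingDirection (hQ : ∀ k, (Q k).PosSemidef) (j : κ)
    (hdim : Module.finrank ℝ
        ↥(Submodule.span ℝ (Set.range b) ⊔ LinearMap.ker (Q j).mulVecLin ⊔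
            ⨆ k : κ, ⨆ _ : k ≠ j, LinearMap.range (Q k).mulVecLin) < n) :
    ∃ d, IsIsolatingDirection Q b j d := by
  set W := Submodule.span ℝ (Set.range b) ⊔ LinearMap.ker (Q j).mulVecLin ⊔
    ⨆ k : κ, ⨆ _ : k ≠ j, LinearMap.range (Q k).mulVecLin
  have hW : W ≠ ⊤ := fun h => by
    rw [h, finrank_top, Module.finrank_fin_fun] at hdim
    exact hdim.false
  obtain ⟨d, hd0, hdW⟩ := Submodule.exists_ne_zero_forall_dotProduct_eq_zero hW
  have hrange : ∀ k ≠ j, Q k *ᵥ d ∈ W := fun k hk =>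
    Submodule.mem_sup_right (Submodule.mem_iSup_of_mem k (Submodule.mem_iSup_of_mem hk ⟨d, rfl⟩))
  refine ⟨d, fun i => ?_, fun k hk => ?_, ?_⟩
  · exact hdW _ (Submodule.mem_sup_left (Submodule.mem_sup_left (Submodule.subset_span ⟨i, rfl⟩)))
  · rw [← (hQ k).dotProduct_mulVec_zero_iff, star_trivial, dotProduct_comm]
    exact hdW _ (hrange k hk)
  · refine ((hQ j).dotProduct_mulVec_nonneg d).lt_of_ne' fun hqf => hd0 ?_
    have hker : Q j *ᵥ d = 0 := ((hQ j).dotProduct_mulVec_zero_iff d).mp (by simpa [qf] using hqf)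
    have hdW' : d ∈ W := Submodule.mem_sup_left (Submodule.mem_sup_right hker)
    simpa using hdW d hdW'

lemma qf_add_sum_smul [DecidableEq κ] (hQ : ∀ k, (Q k).IsHermitian) {J : Finset κ}
    {d : κ → Fin n → ℝ} (hd : ∀ j ∈ J, ∀ k ≠ j, Q k *ᵥ d j = 0) (x : Fin n → ℝ) (s : κ → ℝ)
    (k : κ) : qf (Q k) (x + ∑ j ∈ J, s j • d j) =
      if k ∈ J then qf (Q k) (x + s k • d k) else qf (Q k) x := by
  have hvanish : ∀ J' ⊆ J, k ∉ J' → Q k *ᵥ ∑ j ∈ J', s j • d j = 0 := fun J' hJ' hk => by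
    rw [mulVec_sum]
    exact Finset.sum_eq_zero fun j hj => by
      rw [mulVec_smul, hd j (hJ' hj) k (ne_of_mem_of_not_mem hj hk).symm, smul_zero]
  split_ifs with hk
  · rw [← Finset.add_sum_erase J _ hk, ← add_assoc]
    exact qf_add_of_mulVec_eq_zero (hQ k) _
      (hvanish _ (Finset.erase_subset k J) (Finset.notMem_erase k J))
  · exact qf_add_of_mulVec_eq_zero (hQ k) x (hvanish J subset_rfl hk)

lemma exists_tight_lift [DecidableEq κ] (hQ : ∀ k, (Q k).IsHermitian) {J : Finset κ}
    (hdir : ∀ j ∈ J, ∃ d, IsIsolatingDirection Q b j d) (b0 x : Fin n → ℝ) (t : κ → ℝ)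
    (ht : ∀ j ∈ J, qf (Q j) x ≤ t j) :
    ∃ x', (∀ i, b i ⬝ᵥ x' = b i ⬝ᵥ x) ∧ b0 ⬝ᵥ x' ≤ b0 ⬝ᵥ x ∧
      ∀ k, qf (Q k) x' = if k ∈ J then t k else qf (Q k) x := by
  choose! d hd using hdir
  have hstep : ∀ j ∈ J, ∃ s, qf (Q j) (x + s • d j) = t j ∧ (b0 ⬝ᵥ d j) * s ≤ 0 :=
    fun j hj => by
      obtain ⟨s, hroot, hsign⟩ := exists_quadratic_root_mul_nonpos
        (β := 2 * (d j ⬝ᵥ (Q j *ᵥ x))) (b0 ⬝ᵥ d j) (hd j hj).qf_pos (sub_nonpos.mpr (ht j hj))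
      exact ⟨s, by rw [qf_add_smul (hQ j)]; linarith, hsign⟩
  choose! s hs using hstep
  refine ⟨x + ∑ j ∈ J, s j • d j, fun i => ?_, ?_, fun k => ?_⟩
  · rw [dotProduct_add, dotProduct_sum, Finset.sum_eq_zero fun j hj => by
      rw [dotProduct_smul, (hd j hj).dotProduct_eq_zero i, smul_zero], add_zero]
  · rw [dotProduct_add, dotProduct_sum, add_le_iff_nonpos_right]
    exact Finset.sum_nonpos fun j hj => by
      rw [dotProduct_smul, smul_eq_mul, mul_comm]
      exact (hs j hj).2
  · rw [qf_add_sum_smul hQ (fun j hj => (hd j hj).mulVec_eq_zero) x s k]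
    split_ifs with hk
    exacts [(hs k hk).1, rfl]

end Lifting

lemma Finset.sum_ite_mem_eq_sum_compl_add_sum {κ M : Type*} [Fintype κ] [DecidableEq κ]
    [AddCommMonoid M] (J : Finset κ) (f g : κ → M) :
    ∑ k, (if k ∈ J then f k else g k) = ∑ k ∈ Jᶜ, g k + ∑ k ∈ J, f k := by
  rw [← J.sum_compl_add_sum]
  congr 1 <;> refine Finset.sum_congr rfl fun k hk => ?_
  · rw [if_neg (Finset.mem_compl.mp hk)]
  · rw [if_pos hk]

theorem stmt3_general (n m p : ℕ) (hn : 1 ≤ n)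
    (Q : Fin m → Matrix (Fin n) (Fin n) ℝ) (hQ : ∀ j, (Q j).PosSemidef)
    (a0 : Fin m → ℝ) (a : Fin p → Fin m → ℝ)
    (b0 : Fin n → ℝ) (b : Fin p → Fin n → ℝ) (c0 : ℝ) (c : Fin p → ℝ)
    (J : Finset (Fin m))
    (hdim : ∀ j ∈ J,
      Module.finrank ℝ
        ↥(Submodule.span ℝ (Set.range b) ⊔ LinearMap.ker (Q j).mulVecLin ⊔
            ⨆ i : Fin m, ⨆ _ : i ≠ j, LinearMap.range (Q i).mulVecLin) ≤ n - 1)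
    (xs : Fin n → ℝ) :
    -- `xs` globally solves (QCQP₁)
    ((∀ i, (∑ j, a i j * qf (Q j) xs) + 2 * (b i ⬝ᵥ xs) + c i ≤ 0) ∧
      (∀ x : Fin n → ℝ,
        (∀ i, (∑ j, a i j * qf (Q j) x) + 2 * (b i ⬝ᵥ x) + c i ≤ 0) →
        (∑ j, a0 j * qf (Q j) xs) + 2 * (b0 ⬝ᵥ xs) + c0 ≤
          (∑ j, a0 j * qf (Q j) x) + 2 * (b0 ⬝ᵥ x) + c0)) ↔
    -- `(xs, (xsᵀ Q_j xs)_j)` globally solves (CR)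
    (((∀ i, (∑ j ∈ Jᶜ, a i j * qf (Q j) xs) + (∑ j ∈ J, a i j * qf (Q j) xs)
            + 2 * (b i ⬝ᵥ xs) + c i ≤ 0) ∧
        (∀ j ∈ J, qf (Q j) xs ≤ qf (Q j) xs)) ∧
      (∀ (x : Fin n → ℝ) (t : Fin m → ℝ),
        ((∀ i, (∑ j ∈ Jᶜ, a i j * qf (Q j) x) + (∑ j ∈ J, a i j * t j)
              + 2 * (b i ⬝ᵥ x) + c i ≤ 0) ∧
          (∀ j ∈ J, qf (Q j) x ≤ t j)) →
        (∑ j ∈ Jᶜ, a0 j * qf (Q j) xs) + (∑ j ∈ J, a0 j * qf (Q j) xs)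
            + 2 * (b0 ⬝ᵥ xs) + c0 ≤
          (∑ j ∈ Jᶜ, a0 j * qf (Q j) x) + (∑ j ∈ J, a0 j * t j)
            + 2 * (b0 ⬝ᵥ x) + c0)) := by
  have hdir : ∀ j ∈ J, ∃ d, IsIsolatingDirection Q b j d := fun j hj =>
    exists_isIsolatingDirection hQ j (by have := hdim j hj; omega)
  simp only [Finset.sum_compl_add_sum, le_refl, implies_true, and_true]
  constructor
  · rintro ⟨hfeas, hopt⟩
    refine ⟨hfeas, fun x t ⟨hx, ht⟩ => ?_⟩
    obtain ⟨x', hbx', hb0x', hqx'⟩ := exists_tight_lift (fun j => (hQ j).1) hdir b0 x t ht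
    have hval (w : Fin m → ℝ) :
        ∑ j, w j * qf (Q j) x' = ∑ j ∈ Jᶜ, w j * qf (Q j) x + ∑ j ∈ J, w j * t j := by
      simp only [hqx', mul_ite, Finset.sum_ite_mem_eq_sum_compl_add_sum]
    have hopt' := hopt x' fun i => by rw [hval, hbx']; exact hx i
    rw [hval] at hopt'
    linarith
  · rintro ⟨hfeas, hopt⟩
    refine ⟨hfeas, fun x hx => ?_⟩
    simpa only [Finset.sum_compl_add_sum] using
      hopt x (fun j => qf (Q j) x) ⟨by simpa only [Finset.sum_compl_add_sum] using hx,
        fun _ _ => le_rfl⟩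

/-- equivalence of the one-sided QCQP and its convex relaxation (CR). -/
theorem stmt3 (n m p : ℕ) (hn : 1 ≤ n) (hm : 1 ≤ m) (hp : 1 ≤ p)
    (Q : Fin m → Matrix (Fin n) (Fin n) ℝ) (hQ : ∀ j, (Q j).PosSemidef)
    (a0 : Fin m → ℝ) (a : Fin p → Fin m → ℝ)
    (ha0 : ∀ j, a0 j = -1 ∨ a0 j = 0 ∨ a0 j = 1)
    (ha : ∀ i j, a i j = -1 ∨ a i j = 0 ∨ a i j = 1)
    (b0 : Fin n → ℝ) (b : Fin p → Fin n → ℝ) (c0 : ℝ) (c : Fin p → ℝ)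
    (J : Finset (Fin m))
    (hJ : ∀ j, j ∈ J ↔ (a0 j = -1 ∨ ∃ i, a i j = -1))
    (hdim : ∀ j ∈ J,
      Module.finrank ℝ
        ↥(Submodule.span ℝ (Set.range b) ⊔ LinearMap.ker (Q j).mulVecLin ⊔
            ⨆ i : Fin m, ⨆ _ : i ≠ j, LinearMap.range (Q i).mulVecLin) ≤ n - 1)
    (hCR : sInf ((fun q : (Fin n → ℝ) × (Fin m → ℝ) =>
        (((∑ j ∈ Jᶜ, a0 j * qf (Q j) q.1) + (∑ j ∈ J, a0 j * q.2 j)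
            + 2 * (b0 ⬝ᵥ q.1) + c0 : ℝ) : EReal)) ''
      {q | (∀ i, (∑ j ∈ Jᶜ, a i j * qf (Q j) q.1) + (∑ j ∈ J, a i j * q.2 j)
              + 2 * (b i ⬝ᵥ q.1) + c i ≤ 0) ∧
           (∀ j ∈ J, qf (Q j) q.1 ≤ q.2 j)}) ≠ ⊥)
    (xs : Fin n → ℝ) :
    -- `xs` globally solves (QCQP₁)
    ((∀ i, (∑ j, a i j * qf (Q j) xs) + 2 * (b i ⬝ᵥ xs) + c i ≤ 0) ∧
      (∀ x : Fin n → ℝ,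
        (∀ i, (∑ j, a i j * qf (Q j) x) + 2 * (b i ⬝ᵥ x) + c i ≤ 0) →
        (∑ j, a0 j * qf (Q j) xs) + 2 * (b0 ⬝ᵥ xs) + c0 ≤
          (∑ j, a0 j * qf (Q j) x) + 2 * (b0 ⬝ᵥ x) + c0)) ↔
    -- `(xs, (xsᵀ Q_j xs)_j)` globally solves (CR)
    (((∀ i, (∑ j ∈ Jᶜ, a i j * qf (Q j) xs) + (∑ j ∈ J, a i j * qf (Q j) xs)
            + 2 * (b i ⬝ᵥ xs) + c i ≤ 0) ∧
        (∀ j ∈ J, qf (Q j) xs ≤ qf (Q j) xs)) ∧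
      (∀ (x : Fin n → ℝ) (t : Fin m → ℝ),
        ((∀ i, (∑ j ∈ Jᶜ, a i j * qf (Q j) x) + (∑ j ∈ J, a i j * t j)
              + 2 * (b i ⬝ᵥ x) + c i ≤ 0) ∧
          (∀ j ∈ J, qf (Q j) x ≤ t j)) →
        (∑ j ∈ Jᶜ, a0 j * qf (Q j) xs) + (∑ j ∈ J, a0 j * qf (Q j) xs)
            + 2 * (b0 ⬝ᵥ xs) + c0 ≤
          (∑ j ∈ Jᶜ, a0 j * qf (Q j) x) + (∑ j ∈ J, a0 j * t j)
            + 2 * (b0 ⬝ᵥ x) + c0)) :=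
  stmt3_general n m p hn Q hQ a0 a b0 b c0 c J hdim xs

end
end

section
/- Let A ∈ ℝⁿˣⁿ be symmetric and not positive semidefinite (equivalently, its smallest eigenvalue λ_min(A) < 0), and let b ∈ ℝⁿ. Then the nonconvex trust region subproblem and its convex relaxation have the same optimal value: min { xᵀA x + 2 bᵀx : x ∈ ℝⁿ, ‖x‖² ≤ 1 } = min { xᵀ(A − λ_min(A) I_n) x + 2 bᵀx + λ_min(A) : x ∈ ℝⁿ, ‖x‖² ≤ 1 }, where the second problem is convex since A − λ_min(A) I_n ⪰ 0. -/
/-!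
Put `M = A - λ I ⪰ 0`, where `λ = lmin < 0`. On the unit ball the relaxed objective equals
`xᵀAx + 2bᵀx + λ(1 - ‖x‖²)`, which is at most the original one. Conversely, `λ` is an eigenvalue
of `A`; choose a unit eigenvector `w` with `bᵀw ≤ 0`. Moving a feasible `x` along `w` to a point
`x + t w` (`t ≥ 0`) of the unit sphere leaves `xᵀMx` unchanged since `Mw = 0`, does not increase
`2bᵀx`, and on the sphere the two objectives agree.
-/

open Matrix

namespace Matrix

variable {ι : Type*} [Fintype ι]

theorem IsHermitian.posSemidef_sub_smul_one_iff [DecidableEq ι] {A : Matrix ι ι ℝ}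
    (hA : A.IsHermitian) (c : ℝ) :
    (A - c • (1 : Matrix ι ι ℝ)).PosSemidef ↔ c ∈ lowerBounds (spectrum ℝ A) := by
  have hsub : (A - c • (1 : Matrix ι ι ℝ)).IsHermitian :=
    hA.sub (isHermitian_one.smul (IsSelfAdjoint.all c))
  rw [posSemidef_iff_isHermitian_and_spectrum_nonneg, ← Algebra.algebraMap_eq_smul_one,
    ← spectrum.sub_singleton_eq, Set.sub_singleton]
  simp only [Algebra.algebraMap_eq_smul_one, hsub, true_and]
  simp [mem_lowerBounds, Set.subset_def]

theorem IsHermitian.posSemidef_iff_nonneg_of_isGreatest [DecidableEq ι] {A : Matrix ι ι ℝ}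
    (hA : A.IsHermitian) {l : ℝ}
    (hl : IsGreatest {c : ℝ | (A - c • (1 : Matrix ι ι ℝ)).PosSemidef} l) :
    A.PosSemidef ↔ 0 ≤ l := by
  have h0 := hA.posSemidef_sub_smul_one_iff 0
  rw [zero_smul, sub_zero] at h0
  rw [h0]
  exact ⟨fun h => hl.2 ((hA.posSemidef_sub_smul_one_iff 0).2 h),
    fun h μ hμ => h.trans ((hA.posSemidef_sub_smul_one_iff l).1 hl.1 hμ)⟩

theorem IsHermitian.mem_spectrum_of_isGreatest [DecidableEq ι] {A : Matrix ι ι ℝ}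
    (hA : A.IsHermitian) {l : ℝ}
    (hl : IsGreatest {c : ℝ | (A - c • (1 : Matrix ι ι ℝ)).PosSemidef} l) :
    l ∈ spectrum ℝ A := by
  have hglb : IsGLB (spectrum ℝ A) l := by
    simpa only [IsGLB, hA.posSemidef_sub_smul_one_iff, Set.ofPred_mem_eq] using hl
  have hne : (spectrum ℝ A).Nonempty := by
    by_contra! hempty
    rw [hempty] at hglb
    linarith [hglb.2 (by simp : l + 1 ∈ lowerBounds (∅ : Set ℝ))]
  exact hglb.csInf_eq hne ▸ hne.csInf_mem (finite_spectrum A)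

theorem exists_ne_zero_mulVec_eq_smul_of_mem_spectrum {K : Type*} [Field K] [DecidableEq ι]
    {A : Matrix ι ι K} {l : K} (hl : l ∈ spectrum K A) : ∃ v ≠ 0, A *ᵥ v = l • v := by
  rw [spectrum.mem_iff, isUnit_iff_isUnit_det, isUnit_iff_ne_zero, not_not,
    ← exists_mulVec_eq_zero_iff] at hl
  obtain ⟨v, hv, hAv⟩ := hl
  refine ⟨v, hv, ?_⟩
  rw [Algebra.algebraMap_eq_smul_one, sub_mulVec, smul_mulVec, one_mulVec, sub_eq_zero] at hAv
  exact hAv.symm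

theorem exists_dotProduct_smul_self_eq_one_and_dotProduct_nonpos {v : ι → ℝ} (hv : v ≠ 0)
    (b : ι → ℝ) :
    ∃ r : ℝ, (r • v) ⬝ᵥ (r • v) = 1 ∧ b ⬝ᵥ (r • v) ≤ 0 := by
  have hpos : 0 < v ⬝ᵥ v :=
    lt_of_le_of_ne (Finset.sum_nonneg fun _ _ => mul_self_nonneg _)
      (Ne.symm (dotProduct_self_eq_zero.not.2 hv))
  have hnorm : ∀ r : ℝ, r ^ 2 = (v ⬝ᵥ v)⁻¹ → (r • v) ⬝ᵥ (r • v) = 1 := fun r hr => by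
    rw [smul_dotProduct, dotProduct_smul, smul_smul, smul_eq_mul, ← sq, hr,
      inv_mul_cancel₀ hpos.ne']
  set r := (√(v ⬝ᵥ v))⁻¹
  have hr : r ^ 2 = (v ⬝ᵥ v)⁻¹ := by rw [inv_pow, Real.sq_sqrt hpos.le]
  rcases le_total (b ⬝ᵥ (r • v)) 0 with hb | hb
  · exact ⟨r, hnorm r hr, hb⟩
  · refine ⟨-r, hnorm (-r) (by rwa [neg_sq]), ?_⟩
    rw [neg_smul, dotProduct_neg]
    linarith

theorem exists_nonneg_dotProduct_add_smul_self_eq_one {x w : ι → ℝ} (hx : x ⬝ᵥ x ≤ 1)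
    (hw : w ⬝ᵥ w = 1) : ∃ t : ℝ, 0 ≤ t ∧ (x + t • w) ⬝ᵥ (x + t • w) = 1 := by
  set s := x ⬝ᵥ w
  -- the nonnegative root of `t ^ 2 + 2 s t + x ⬝ᵥ x - 1`
  have hdisc : 0 ≤ s ^ 2 + (1 - x ⬝ᵥ x) := by nlinarith [sq_nonneg s]
  refine ⟨√(s ^ 2 + (1 - x ⬝ᵥ x)) - s, ?_, ?_⟩
  · have : |s| ≤ √(s ^ 2 + (1 - x ⬝ᵥ x)) := by
      rw [← Real.sqrt_sq_eq_abs]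
      exact Real.sqrt_le_sqrt (by linarith)
    linarith [le_abs_self s]
  · have hsq := Real.sq_sqrt hdisc
    simp only [add_dotProduct, dotProduct_add, smul_dotProduct, dotProduct_smul, smul_eq_mul, hw,
      dotProduct_comm w x]
    nlinarith

theorem dotProduct_sub_smul_one_mulVec {R : Type*} [CommRing R] [DecidableEq ι]
    (A : Matrix ι ι R) (c : R) (x : ι → R) :
    x ⬝ᵥ ((A - c • (1 : Matrix ι ι R)) *ᵥ x) = x ⬝ᵥ (A *ᵥ x) - c * (x ⬝ᵥ x) := by
  rw [sub_mulVec, dotProduct_sub, smul_mulVec, one_mulVec, dotProduct_smul, smul_eq_mul]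

theorem IsSymm.dotProduct_mulVec_add_smul_of_mulVec_eq_zero {R : Type*} [CommRing R]
    {M : Matrix ι ι R} (hM : M.IsSymm) {w : ι → R} (hw : M *ᵥ w = 0) (x : ι → R) (t : R) :
    (x + t • w) ⬝ᵥ (M *ᵥ (x + t • w)) = x ⬝ᵥ (M *ᵥ x) := by
  have hwM : w ⬝ᵥ (M *ᵥ x) = 0 := by
    rw [dotProduct_mulVec, ← mulVec_transpose, hM.eq, hw, zero_dotProduct]
  rw [mulVec_add, mulVec_smul, hw, smul_zero, add_zero, add_dotProduct, smul_dotProduct, hwM,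
    smul_zero, add_zero]

end Matrix

/-- the trust region subproblem and its convex relaxation have the same
optimal value. `lmin` is the smallest eigenvalue of `A`, characterized as the greatest
`c` with `A - c I ⪰ 0`. -/
theorem stmt4 (n : ℕ) (A : Matrix (Fin n) (Fin n) ℝ) (hA : A.IsSymm)
    (hnpsd : ¬ A.PosSemidef) (b : Fin n → ℝ) (lmin : ℝ)
    (hlmin : IsGreatest {c : ℝ | (A - c • (1 : Matrix (Fin n) (Fin n) ℝ)).PosSemidef} lmin) :
    sInf ((fun x : Fin n → ℝ => ((x ⬝ᵥ (A *ᵥ x) + 2 * (b ⬝ᵥ x) : ℝ) : EReal)) ''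
        {x | x ⬝ᵥ x ≤ 1}) =
    sInf ((fun x : Fin n → ℝ =>
        ((x ⬝ᵥ ((A - lmin • (1 : Matrix (Fin n) (Fin n) ℝ)) *ᵥ x)
            + 2 * (b ⬝ᵥ x) + lmin : ℝ) : EReal)) ''
        {x | x ⬝ᵥ x ≤ 1}) := by
  have hH : A.IsHermitian := by rwa [IsHermitian, conjTranspose_eq_transpose_of_trivial]
  have hquad := dotProduct_sub_smul_one_mulVec A lmin
  have hlmin_nonpos : lmin ≤ 0 :=
    not_lt.1 fun hpos => hnpsd ((hH.posSemidef_iff_nonneg_of_isGreatest hlmin).2 hpos.le)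
  obtain ⟨v, hv, hAv⟩ := exists_ne_zero_mulVec_eq_smul_of_mem_spectrum
    (hH.mem_spectrum_of_isGreatest hlmin)
  obtain ⟨r, hw, hbw⟩ := exists_dotProduct_smul_self_eq_one_and_dotProduct_nonpos hv b
  have hMw : (A - lmin • (1 : Matrix (Fin n) (Fin n) ℝ)) *ᵥ (r • v) = 0 := by
    rw [mulVec_smul, sub_mulVec, hAv, smul_mulVec, one_mulVec, sub_self, smul_zero]
  apply le_antisymm
  · refine le_sInf ?_
    rintro _ ⟨x, hx, rfl⟩
    obtain ⟨t, ht, hy⟩ := exists_nonneg_dotProduct_add_smul_self_eq_one hx hw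
    refine sInf_le_of_le ⟨x + t • r • v, hy.le, rfl⟩ ?_
    have hM := (hA.sub (isSymm_one.smul lmin)).dotProduct_mulVec_add_smul_of_mulVec_eq_zero
      hMw x t
    rw [hquad, hquad, hy] at hM
    rw [EReal.coe_le_coe_iff, hquad, dotProduct_add, dotProduct_smul, smul_eq_mul]
    linarith [mul_nonpos_of_nonneg_of_nonpos ht hbw]
  · refine le_sInf ?_
    rintro _ ⟨x, hx, rfl⟩
    refine sInf_le_of_le ⟨x, hx, rfl⟩ ?_
    rw [EReal.coe_le_coe_iff, hquad]
    linarith [mul_le_mul_of_nonpos_left (show x ⬝ᵥ x ≤ 1 from hx) hlmin_nonpos]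
end

section
/- Let A ∈ ℝⁿˣⁿ be symmetric and not positive semidefinite (so λ_min(A) < 0), let a, b₁, …, b_p, x₀ ∈ ℝⁿ and u, β₁, …, β_p ∈ ℝ. Suppose the dimension of the span of span{b₁, …, b_p} ∪ R(A − λ_min(A) I_n) is at most n − 1. Then the extended trust region subproblem (ETRS): minimize xᵀA x + aᵀx over x ∈ ℝⁿ subject to ‖x − x₀‖² ≤ u and b_iᵀx ≤ β_i for i = 1, …, p, has the same optimal value as the convex problem: minimize xᵀ(A − λ_min(A) I_n) x + aᵀx + λ_min(A)(u + 2 xᵀx₀ − ‖x₀‖²) over the same feasible set {x : ‖x − x₀‖² ≤ u, b_iᵀx ≤ β_i, i = 1, …, p}. -/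
/-!
Write `B = A - λ_min I ⪰ 0`. Expanding `xᵀx` around `x₀` gives
`f(x) = xᵀAx + aᵀx = g(x) + λ_min (‖x - x₀‖² - u)`, where `g` is the convex objective, so `g ≤ f` on the
feasible set because `λ_min ≤ 0`. Conversely, the dimension bound yields `v ≠ 0` orthogonal to every
`bᵢ` and to `R(B)`, hence `Bv = 0`. Along the line `x + t v` the linear constraints are unchanged and
`g` is affine, so from a feasible `x` one can move, in the direction in which `g` does not increase,
to a point `y` of the sphere `‖y - x₀‖² = u`, where `f y = g y ≤ g x`.
-/

open Matrix

lemma sInf_image_le_sInf_image {α β : Type*} [CompleteLattice β] {f g : α → β} {S : Set α}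
    (h : ∀ x ∈ S, ∃ y ∈ S, f y ≤ g x) : sInf (f '' S) ≤ sInf (g '' S) := by
  rw [sInf_image, sInf_image]
  exact iInf₂_mono' fun x hx => let ⟨y, hy, hle⟩ := h x hx; ⟨y, hy, hle⟩

lemma exists_nonneg_quadratic_eq_zero {a c : ℝ} (ha : 0 < a) (hc : c ≤ 0) (b : ℝ) :
    ∃ t, 0 ≤ t ∧ a * t ^ 2 + b * t + c = 0 := by
  have hdiscrim : b ^ 2 ≤ discrim a b c := by unfold discrim; nlinarith
  set s := √(discrim a b c)
  have hbs : b ≤ s := (le_abs_self b).trans <| by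
    rw [← Real.sqrt_sq_eq_abs]; exact Real.sqrt_le_sqrt hdiscrim
  have hs : discrim a b c = s * s := (Real.mul_self_sqrt ((sq_nonneg b).trans hdiscrim)).symm
  refine ⟨(-b + s) / (2 * a), div_nonneg (by linarith) (by positivity), ?_⟩
  rw [sq, quadratic_eq_zero_iff ha.ne' hs]
  exact Or.inl rfl

namespace Matrix

lemma exists_ne_zero_forall_dotProduct_eq_zero {K ι : Type*} [Field K] [Fintype ι]
    (W : Submodule K (ι → K)) (hW : Module.finrank K W < Fintype.card ι) :
    ∃ v ≠ 0, ∀ w ∈ W, v ⬝ᵥ w = 0 := by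
  classical
  have hlt : W < ⊤ := Submodule.lt_top_of_finrank_lt_finrank (by simpa using hW)
  obtain ⟨f, hf0, hfW⟩ := Submodule.exists_dual_map_eq_bot_of_lt_top hlt inferInstance
  refine ⟨(dotProductEquiv K ι).symm f, by simpa using hf0, fun w hw => ?_⟩
  have hfw : (dotProductEquiv K ι).symm f ⬝ᵥ w = f w :=
    LinearMap.congr_fun ((dotProductEquiv K ι).apply_symm_apply f) w
  rw [hfw, ← Submodule.mem_bot K, ← hfW]
  exact Submodule.mem_map_of_mem hw

section CommRing

variable {R n : Type*} [CommRing R] [Fintype n]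

lemma IsSymm.dotProduct_mulVec_comm {B : Matrix n n R} (hB : B.IsSymm) (v w : n → R) :
    v ⬝ᵥ (B *ᵥ w) = (B *ᵥ v) ⬝ᵥ w := by
  rw [dotProduct_mulVec, ← mulVec_transpose, hB.eq]

lemma IsSymm.mulVec_eq_zero_of_forall_dotProduct_mulVec_eq_zero [DecidableEq n]
    {B : Matrix n n R} (hB : B.IsSymm) {v : n → R} (h : ∀ w, v ⬝ᵥ (B *ᵥ w) = 0) :
    B *ᵥ v = 0 := by
  ext i
  have hi := h (Pi.single i 1)
  rwa [hB.dotProduct_mulVec_comm, dotProduct_single_one] at hi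

lemma IsSymm.add_dotProduct_mulVec_add_of_mulVec_eq_zero {B : Matrix n n R} (hB : B.IsSymm)
    {v : n → R} (hv : B *ᵥ v = 0) (x : n → R) :
    (x + v) ⬝ᵥ (B *ᵥ (x + v)) = x ⬝ᵥ (B *ᵥ x) := by
  rw [mulVec_add, hv, add_zero, add_dotProduct, hB.dotProduct_mulVec_comm v, hv, zero_dotProduct,
    add_zero]

lemma dotProduct_mulVec_sub_smul_one [DecidableEq n] (A : Matrix n n R) (c : R) (x : n → R) :
    x ⬝ᵥ ((A - c • 1) *ᵥ x) = x ⬝ᵥ (A *ᵥ x) - c * (x ⬝ᵥ x) := by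
  rw [sub_mulVec, smul_mulVec, one_mulVec, dotProduct_sub, dotProduct_smul, smul_eq_mul]

lemma sub_dotProduct_sub_self (x y : n → R) :
    (x - y) ⬝ᵥ (x - y) = x ⬝ᵥ x - 2 * (x ⬝ᵥ y) + y ⬝ᵥ y := by
  rw [sub_dotProduct, dotProduct_sub, dotProduct_sub, dotProduct_comm y x]
  ring

lemma dotProduct_mulVec_add_eq_shifted_add [DecidableEq n] (A : Matrix n n R) (a x x₀ : n → R)
    (c u : R) :
    x ⬝ᵥ (A *ᵥ x) + a ⬝ᵥ x =
      x ⬝ᵥ ((A - c • 1) *ᵥ x) + a ⬝ᵥ x + c * (u + 2 * (x ⬝ᵥ x₀) - x₀ ⬝ᵥ x₀)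
        + c * ((x - x₀) ⬝ᵥ (x - x₀) - u) := by
  rw [dotProduct_mulVec_sub_smul_one, sub_dotProduct_sub_self]
  ring

lemma IsSymm.shifted_objective_add_smul {B : Matrix n n R} (hB : B.IsSymm) {v : n → R}
    (hv : B *ᵥ v = 0) (a x x₀ : n → R) (c u t : R) :
    (x + t • v) ⬝ᵥ (B *ᵥ (x + t • v)) + a ⬝ᵥ (x + t • v)
        + c * (u + 2 * ((x + t • v) ⬝ᵥ x₀) - x₀ ⬝ᵥ x₀) =
      x ⬝ᵥ (B *ᵥ x) + a ⬝ᵥ x + c * (u + 2 * (x ⬝ᵥ x₀) - x₀ ⬝ᵥ x₀)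
        + t * (a ⬝ᵥ v + 2 * c * (v ⬝ᵥ x₀)) := by
  rw [hB.add_dotProduct_mulVec_add_of_mulVec_eq_zero (by rw [mulVec_smul, hv, smul_zero])]
  simp only [dotProduct_add, add_dotProduct, dotProduct_smul, smul_dotProduct, smul_eq_mul]
  ring

end CommRing

lemma nonpos_of_posSemidef_sub_smul_one {n : Type*} [DecidableEq n] {A : Matrix n n ℝ} {c : ℝ}
    (h : (A - c • 1).PosSemidef) (hA : ¬ A.PosSemidef) : c ≤ 0 := by
  by_contra! hc
  exact hA (by simpa using h.add (PosSemidef.one.smul hc.le))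

section Real

variable {n : Type*} [Fintype n]

lemma exists_nonneg_add_smul_on_sphere {x x₀ v : n → ℝ} {u : ℝ} (hv : v ≠ 0)
    (hx : (x - x₀) ⬝ᵥ (x - x₀) ≤ u) :
    ∃ t : ℝ, 0 ≤ t ∧ (x + t • v - x₀) ⬝ᵥ (x + t • v - x₀) = u := by
  have hvv : 0 < v ⬝ᵥ v := by simpa using dotProduct_self_star_pos_iff.2 hv
  obtain ⟨t, ht, hroot⟩ :=
    exists_nonneg_quadratic_eq_zero hvv (sub_nonpos.2 hx) (2 * (v ⬝ᵥ (x - x₀)))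
  refine ⟨t, ht, ?_⟩
  rw [show x + t • v - x₀ = (x - x₀) + t • v by abel]
  simp only [add_dotProduct, dotProduct_add, smul_dotProduct, dotProduct_smul, smul_eq_mul,
    dotProduct_comm (x - x₀) v]
  linear_combination hroot

lemma exists_add_smul_on_sphere_mul_nonpos {x x₀ v : n → ℝ} {u : ℝ} (hv : v ≠ 0)
    (hx : (x - x₀) ⬝ᵥ (x - x₀) ≤ u) (c : ℝ) :
    ∃ t : ℝ, t * c ≤ 0 ∧ (x + t • v - x₀) ⬝ᵥ (x + t • v - x₀) = u := by
  rcases le_or_gt c 0 with hc | hc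
  · obtain ⟨t, ht, hsphere⟩ := exists_nonneg_add_smul_on_sphere hv hx
    exact ⟨t, mul_nonpos_of_nonneg_of_nonpos ht hc, hsphere⟩
  · obtain ⟨t, ht, hsphere⟩ := exists_nonneg_add_smul_on_sphere (neg_ne_zero.2 hv) hx
    exact ⟨-t, by nlinarith, by rwa [neg_smul, ← smul_neg]⟩

end Real

end Matrix

theorem stmt5_general (n p : ℕ) (A : Matrix (Fin n) (Fin n) ℝ)
    (hnpsd : ¬ A.PosSemidef) (lmin : ℝ)
    (hlmin : IsGreatest {c : ℝ | (A - c • (1 : Matrix (Fin n) (Fin n) ℝ)).PosSemidef} lmin)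
    (a : Fin n → ℝ) (b : Fin p → Fin n → ℝ) (x0 : Fin n → ℝ) (u : ℝ) (β : Fin p → ℝ)
    (hdim : Module.finrank ℝ
      ↥(Submodule.span ℝ (Set.range b) ⊔
          LinearMap.range (A - lmin • (1 : Matrix (Fin n) (Fin n) ℝ)).mulVecLin) ≤ n - 1) :
    sInf ((fun x : Fin n → ℝ => ((x ⬝ᵥ (A *ᵥ x) + a ⬝ᵥ x : ℝ) : EReal)) ''
        {x | (x - x0) ⬝ᵥ (x - x0) ≤ u ∧ ∀ i, b i ⬝ᵥ x ≤ β i}) =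
    sInf ((fun x : Fin n → ℝ =>
        ((x ⬝ᵥ ((A - lmin • (1 : Matrix (Fin n) (Fin n) ℝ)) *ᵥ x) + a ⬝ᵥ x
            + lmin * (u + 2 * (x ⬝ᵥ x0) - x0 ⬝ᵥ x0) : ℝ) : EReal)) ''
        {x | (x - x0) ⬝ᵥ (x - x0) ≤ u ∧ ∀ i, b i ⬝ᵥ x ≤ β i}) := by
  set B := A - lmin • (1 : Matrix (Fin n) (Fin n) ℝ)
  have hB : B.IsSymm := isHermitian_iff_isSymm.1 hlmin.1.1
  have hlmin_nonpos : lmin ≤ 0 := nonpos_of_posSemidef_sub_smul_one hlmin.1 hnpsd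
  have hn : 0 < n := Nat.pos_of_ne_zero fun hn => hnpsd <| by
    subst hn; exact Subsingleton.elim (0 : Matrix (Fin 0) (Fin 0) ℝ) A ▸ .zero
  obtain ⟨v, hv0, hvW⟩ := exists_ne_zero_forall_dotProduct_eq_zero _
    (hdim.trans_lt (by simpa using Nat.sub_lt hn one_pos))
  have hBv : B *ᵥ v = 0 := hB.mulVec_eq_zero_of_forall_dotProduct_mulVec_eq_zero fun w =>
    hvW _ (Submodule.mem_sup_right ⟨w, rfl⟩)
  have hbv (i : Fin p) : b i ⬝ᵥ v = 0 := (dotProduct_comm _ _).trans <|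
    hvW _ (Submodule.mem_sup_left (Submodule.subset_span ⟨i, rfl⟩))
  apply le_antisymm
  · refine sInf_image_le_sInf_image fun x ⟨hxu, hxb⟩ => ?_
    obtain ⟨t, htc, hsphere⟩ :=
      exists_add_smul_on_sphere_mul_nonpos hv0 hxu (a ⬝ᵥ v + 2 * lmin * (v ⬝ᵥ x0))
    refine ⟨x + t • v, ⟨hsphere.le, fun i => ?_⟩, EReal.coe_le_coe ?_⟩
    · simpa [dotProduct_add, hbv i] using hxb i
    · rw [dotProduct_mulVec_add_eq_shifted_add A a _ x0 lmin u, hsphere, sub_self, mul_zero,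
        add_zero, hB.shifted_objective_add_smul hBv]
      linarith
  · refine sInf_image_le_sInf_image fun x hx => ⟨x, hx, EReal.coe_le_coe ?_⟩
    rw [dotProduct_mulVec_add_eq_shifted_add A a x x0 lmin u]
    nlinarith [mul_nonneg_of_nonpos_of_nonpos hlmin_nonpos (sub_nonpos.2 hx.1)]

/-- the extended trust region subproblem (ETRS) with linear inequality
constraints has the same optimal value as its convex relaxation, under the dimension
condition. `lmin` is the smallest eigenvalue of `A`. -/
theorem stmt5 (n p : ℕ) (A : Matrix (Fin n) (Fin n) ℝ) (hA : A.IsSymm)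
    (hnpsd : ¬ A.PosSemidef) (lmin : ℝ)
    (hlmin : IsGreatest {c : ℝ | (A - c • (1 : Matrix (Fin n) (Fin n) ℝ)).PosSemidef} lmin)
    (a : Fin n → ℝ) (b : Fin p → Fin n → ℝ) (x0 : Fin n → ℝ) (u : ℝ) (β : Fin p → ℝ)
    (hdim : Module.finrank ℝ
      ↥(Submodule.span ℝ (Set.range b) ⊔
          LinearMap.range (A - lmin • (1 : Matrix (Fin n) (Fin n) ℝ)).mulVecLin) ≤ n - 1) :
    sInf ((fun x : Fin n → ℝ => ((x ⬝ᵥ (A *ᵥ x) + a ⬝ᵥ x : ℝ) : EReal)) ''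
        {x | (x - x0) ⬝ᵥ (x - x0) ≤ u ∧ ∀ i, b i ⬝ᵥ x ≤ β i}) =
    sInf ((fun x : Fin n → ℝ =>
        ((x ⬝ᵥ ((A - lmin • (1 : Matrix (Fin n) (Fin n) ℝ)) *ᵥ x) + a ⬝ᵥ x
            + lmin * (u + 2 * (x ⬝ᵥ x0) - x0 ⬝ᵥ x0) : ℝ) : EReal)) ''
        {x | (x - x0) ⬝ᵥ (x - x0) ≤ u ∧ ∀ i, b i ⬝ᵥ x ≤ β i}) :=
  stmt5_general n p A hnpsd lmin hlmin a b x0 u β hdim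
end

section
/- Let Q ∈ ℝⁿˣⁿ be symmetric and indefinite, and write Q = Q₁ − Q₂ where Q₁, Q₂ ∈ ℝⁿˣⁿ are symmetric positive semidefinite with orthogonal ranges, R(Q₁) ⊥ R(Q₂) (for instance, Q₁ and Q₂ are the positive and negative semidefinite parts of Q), and let r₁ = rank(Q₁), r₂ = rank(Q₂). Let b₀, …, b_p ∈ ℝⁿ, d₀ ∈ ℝ, and l_i ∈ ℝ ∪ {−∞}, u_i ∈ ℝ ∪ {+∞} with l_i ≤ u_i. Suppose the rank of the matrix [b₁, …, b_p] is at most min{r₁, r₂} − 1. Consider (UQ): maximize xᵀQx + 2 b₀ᵀx + d₀ over x ∈ ℝⁿ subject to l_i ≤ xᵀQx + 2 b_iᵀx ≤ u_i for i = 1, …, p, and its relaxation (SOCP'): maximize t₁ − t₂ + 2 b₀ᵀx + d₀ over (x, t₁, t₂) ∈ ℝⁿ × ℝ × ℝ subject to l_i ≤ t₁ − t₂ + 2 b_iᵀx ≤ u_i for all i, xᵀQ₁x ≤ t₁, and xᵀQ₂x ≤ t₂. If the optimal value of (SOCP') is < +∞, then x* is a global maximizer of (UQ) if and only if (x*, x*ᵀQ₁x*,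 x*ᵀQ₂x*) is a global maximizer of (SOCP'). -/
/-!
Fix `j ∈ {1, 2}`. Since `rank [b₁ … b_p] < rank Q_j`, some `d ≠ 0` lies in `R(Q_j)` and is
orthogonal to every `bᵢ`; by orthogonality of the ranges `Q_{3-j} d = 0`. Moving `x` to
`x + α d` therefore leaves every `bᵢᵀx` and `xᵀQ_{3-j}x` unchanged, while `xᵀQ_jx` changes by
a quadratic in `α` with positive leading coefficient, which takes every value `≥ 0` at some
`α` of either sign; the sign is chosen so that `b₀ᵀx` does not decrease. Hence `xᵀQx` can be
moved to any prescribed value, so every feasible point `(x, t₁, t₂)` of (SOCP') is dominated by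
a feasible point `x'` of (UQ) with `x'ᵀQx' = t₁ − t₂`, and the two problems have the same
maximizers.
-/

open Matrix

namespace Matrix

section Field

variable {K m n k : Type*} [Field K] [Fintype n] [Fintype k]

theorem rank_pos_of_mulVec_ne_zero {A : Matrix m n K} {x : n → K} (hx : A *ᵥ x ≠ 0) :
    0 < A.rank :=
  Submodule.one_le_finrank_iff.mpr fun h =>
    hx <| (Submodule.eq_bot_iff _).mp h _ (LinearMap.mem_range_self A.mulVecLin x)

/-- `B` cannot be injective on the range of `A` when its rank is smaller. -/
theorem exists_mulVec_ne_zero_mulVec_mulVec_eq_zero {A : Matrix n k K} {B : Matrix m n K}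
    (h : B.rank < A.rank) : ∃ y, A *ᵥ y ≠ 0 ∧ B *ᵥ (A *ᵥ y) = 0 := by
  have hker := LinearMap.ker_ne_bot_of_finrank_lt
    (f := B.mulVecLin.rangeRestrict.domRestrict (LinearMap.range A.mulVecLin)) h
  obtain ⟨⟨_, y, rfl⟩, hmem, hne⟩ := Submodule.exists_mem_ne_zero_of_ne_bot hker
  refine ⟨y, fun h0 => hne (Subtype.ext h0), ?_⟩
  simpa [Subtype.ext_iff] using hmem

end Field

theorem IsSymm.dotProduct_mulVec_comm_s10 {R n : Type*} [CommSemiring R] [Fintype n]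
    {A : Matrix n n R} (hA : A.IsSymm) (x y : n → R) :
    x ⬝ᵥ (A *ᵥ y) = y ⬝ᵥ (A *ᵥ x) := by
  rw [dotProduct_mulVec, ← mulVec_transpose, hA.eq, dotProduct_comm]

theorem IsSymm.dotProduct_mulVec_add_smul {R n : Type*} [CommRing R] [Fintype n]
    {A : Matrix n n R} (hA : A.IsSymm) (x d : n → R) (α : R) :
    (x + α • d) ⬝ᵥ (A *ᵥ (x + α • d)) =
      x ⬝ᵥ (A *ᵥ x) + 2 * α * (d ⬝ᵥ (A *ᵥ x)) + α ^ 2 * (d ⬝ᵥ (A *ᵥ d)) := by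
  simp only [mulVec_add, mulVec_smul, dotProduct_add, add_dotProduct, dotProduct_smul,
    smul_dotProduct, smul_eq_mul, hA.dotProduct_mulVec_comm_s10 x d]
  ring

namespace PosSemidef

theorem isSymm {n : Type*} {A : Matrix n n ℝ} (hA : A.PosSemidef) : A.IsSymm :=
  isHermitian_iff_isSymm.mp hA.1

variable {n : Type*} [Fintype n] {A C : Matrix n n ℝ}

theorem dotProduct_mulVec_mulVec_pos (hA : A.PosSemidef) {y : n → ℝ} (hy : A *ᵥ y ≠ 0) :
    0 < (A *ᵥ y) ⬝ᵥ (A *ᵥ (A *ᵥ y)) := by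
  have hnonneg : 0 ≤ (A *ᵥ y) ⬝ᵥ (A *ᵥ (A *ᵥ y)) := by
    simpa using hA.dotProduct_mulVec_nonneg (A *ᵥ y)
  refine hnonneg.lt_of_ne' fun h0 => hy ?_
  have hAAy : A *ᵥ (A *ᵥ y) = 0 := (hA.dotProduct_mulVec_zero_iff _).mp (by simpa using h0)
  have : (A *ᵥ y) ⬝ᵥ (A *ᵥ y) = 0 := by
    rw [dotProduct_comm, hA.isSymm.dotProduct_mulVec_comm_s10, hAAy, dotProduct_zero]
  exact dotProduct_self_eq_zero.mp this

theorem mulVec_mulVec_eq_zero_of_orthogonal (hC : C.PosSemidef)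
    (horth : ∀ x y, (A *ᵥ x) ⬝ᵥ (C *ᵥ y) = 0) (y : n → ℝ) : C *ᵥ (A *ᵥ y) = 0 :=
  (hC.dotProduct_mulVec_zero_iff _).mp (by simpa using horth y (A *ᵥ y))

end PosSemidef

end Matrix

theorem exists_nonneg_quadratic_root_s10 {a c Δ : ℝ} (ha : 0 < a) (hΔ : 0 ≤ Δ) :
    ∃ α, 0 ≤ α ∧ a * α ^ 2 + 2 * c * α = Δ := by
  set s := √(c ^ 2 + a * Δ)
  have hs : s ^ 2 = c ^ 2 + a * Δ := Real.sq_sqrt (by positivity)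
  have hcs : c ≤ s := Real.le_sqrt_of_sq_le (by nlinarith)
  refine ⟨(s - c) / a, div_nonneg (by linarith) ha.le, ?_⟩
  field_simp
  linear_combination hs

theorem exists_quadratic_root_mul_nonneg {a c Δ : ℝ} (ha : 0 < a) (hΔ : 0 ≤ Δ) (β : ℝ) :
    ∃ α, a * α ^ 2 + 2 * c * α = Δ ∧ 0 ≤ α * β := by
  rcases le_total 0 β with hβ | hβ
  · obtain ⟨α, hα, hroot⟩ := exists_nonneg_quadratic_root_s10 (c := c) ha hΔ
    exact ⟨α, hroot, mul_nonneg hα hβ⟩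
  · obtain ⟨α, hα, hroot⟩ := exists_nonneg_quadratic_root_s10 (c := -c) ha hΔ
    exact ⟨-α, by linear_combination hroot, by nlinarith⟩

namespace Matrix.PosSemidef

variable {m n : Type*} [Fintype n] {A C : Matrix n n ℝ}

theorem exists_dotProduct_mulVec_add_of_rank_lt (hA : A.PosSemidef) (hC : C.PosSemidef)
    (horth : ∀ x y, (A *ᵥ x) ⬝ᵥ (C *ᵥ y) = 0) {b : m → n → ℝ} (hb : (of b).rank < A.rank)
    (b0 x : n → ℝ) {Δ : ℝ} (hΔ : 0 ≤ Δ) :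
    ∃ x', x' ⬝ᵥ (A *ᵥ x') = x ⬝ᵥ (A *ᵥ x) + Δ ∧ x' ⬝ᵥ (C *ᵥ x') = x ⬝ᵥ (C *ᵥ x) ∧
      (∀ i, b i ⬝ᵥ x' = b i ⬝ᵥ x) ∧ b0 ⬝ᵥ x ≤ b0 ⬝ᵥ x' := by
  obtain ⟨y, hy, hby⟩ := exists_mulVec_ne_zero_mulVec_mulVec_eq_zero hb
  set d := A *ᵥ y
  have hCd : C *ᵥ d = 0 := hC.mulVec_mulVec_eq_zero_of_orthogonal horth y
  obtain ⟨α, hα, hαb⟩ := exists_quadratic_root_mul_nonneg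
    (c := d ⬝ᵥ (A *ᵥ x)) (hA.dotProduct_mulVec_mulVec_pos hy) hΔ (b0 ⬝ᵥ d)
  refine ⟨x + α • d, ?_, ?_, fun i => ?_, ?_⟩
  · rw [hA.isSymm.dotProduct_mulVec_add_smul]
    linear_combination hα
  · rw [hC.isSymm.dotProduct_mulVec_add_smul, hC.isSymm.dotProduct_mulVec_comm_s10 d, hCd]
    simp
  · simp [dotProduct_add, show b i ⬝ᵥ d = 0 from congrFun hby i]
  · rw [dotProduct_add, dotProduct_smul, smul_eq_mul]
    linarith

theorem exists_dotProduct_mulVec_sub_eq_of_rank_lt {Q1 Q2 : Matrix n n ℝ} (hQ1 : Q1.PosSemidef)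
    (hQ2 : Q2.PosSemidef) (horth : ∀ x y, (Q1 *ᵥ x) ⬝ᵥ (Q2 *ᵥ y) = 0) {b : m → n → ℝ}
    (hb1 : (of b).rank < Q1.rank) (hb2 : (of b).rank < Q2.rank) (b0 x : n → ℝ) (τ : ℝ) :
    ∃ x', x' ⬝ᵥ (Q1 *ᵥ x') - x' ⬝ᵥ (Q2 *ᵥ x') = τ ∧
      (∀ i, b i ⬝ᵥ x' = b i ⬝ᵥ x) ∧ b0 ⬝ᵥ x ≤ b0 ⬝ᵥ x' := by
  rcases le_total (x ⬝ᵥ (Q1 *ᵥ x) - x ⬝ᵥ (Q2 *ᵥ x)) τ with h | h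
  · obtain ⟨x', h1, h2, hb, hb0⟩ := hQ1.exists_dotProduct_mulVec_add_of_rank_lt hQ2 horth hb1
      b0 x (sub_nonneg.mpr h)
    exact ⟨x', by linarith, hb, hb0⟩
  · have horth' : ∀ x y, (Q2 *ᵥ x) ⬝ᵥ (Q1 *ᵥ y) = 0 := fun x y => by
      rw [dotProduct_comm, horth]
    obtain ⟨x', h2, h1, hb, hb0⟩ := hQ2.exists_dotProduct_mulVec_add_of_rank_lt hQ1 horth' hb2
      b0 x (sub_nonneg.mpr h)
    exact ⟨x', by linarith, hb, hb0⟩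

end Matrix.PosSemidef

theorem stmt10_general (n p : ℕ) (Q Q1 Q2 : Matrix (Fin n) (Fin n) ℝ)
    (hindef : (∃ x : Fin n → ℝ, 0 < x ⬝ᵥ (Q *ᵥ x)) ∧ (∃ x : Fin n → ℝ, x ⬝ᵥ (Q *ᵥ x) < 0))
    (hdec : Q = Q1 - Q2) (hQ1 : Q1.PosSemidef) (hQ2 : Q2.PosSemidef)
    (horth : ∀ x y : Fin n → ℝ, (Q1 *ᵥ x) ⬝ᵥ (Q2 *ᵥ y) = 0)
    (b0 : Fin n → ℝ) (b : Fin p → Fin n → ℝ) (d0 : ℝ)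
    (l u : Fin p → EReal)
    (hrank : (Matrix.of fun (i : Fin n) (j : Fin p) => b j i).rank ≤
      min Q1.rank Q2.rank - 1)
    (xs : Fin n → ℝ) :
    -- `xs` globally solves (UQ)
    ((∀ i, l i ≤ ((xs ⬝ᵥ (Q *ᵥ xs) + 2 * (b i ⬝ᵥ xs) : ℝ) : EReal) ∧
        ((xs ⬝ᵥ (Q *ᵥ xs) + 2 * (b i ⬝ᵥ xs) : ℝ) : EReal) ≤ u i) ∧
      (∀ x : Fin n → ℝ,
        (∀ i, l i ≤ ((x ⬝ᵥ (Q *ᵥ x) + 2 * (b i ⬝ᵥ x) : ℝ) : EReal) ∧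
            ((x ⬝ᵥ (Q *ᵥ x) + 2 * (b i ⬝ᵥ x) : ℝ) : EReal) ≤ u i) →
        x ⬝ᵥ (Q *ᵥ x) + 2 * (b0 ⬝ᵥ x) + d0 ≤ xs ⬝ᵥ (Q *ᵥ xs) + 2 * (b0 ⬝ᵥ xs) + d0)) ↔
    -- `(xs, xsᵀQ₁xs, xsᵀQ₂xs)` globally solves (SOCP')
    (((∀ i, l i ≤ ((xs ⬝ᵥ (Q1 *ᵥ xs) - xs ⬝ᵥ (Q2 *ᵥ xs) + 2 * (b i ⬝ᵥ xs) : ℝ) : EReal) ∧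
          ((xs ⬝ᵥ (Q1 *ᵥ xs) - xs ⬝ᵥ (Q2 *ᵥ xs) + 2 * (b i ⬝ᵥ xs) : ℝ) : EReal) ≤ u i) ∧
        xs ⬝ᵥ (Q1 *ᵥ xs) ≤ xs ⬝ᵥ (Q1 *ᵥ xs) ∧ xs ⬝ᵥ (Q2 *ᵥ xs) ≤ xs ⬝ᵥ (Q2 *ᵥ xs)) ∧
      (∀ (x : Fin n → ℝ) (t1 t2 : ℝ),
        ((∀ i, l i ≤ ((t1 - t2 + 2 * (b i ⬝ᵥ x) : ℝ) : EReal) ∧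
            ((t1 - t2 + 2 * (b i ⬝ᵥ x) : ℝ) : EReal) ≤ u i) ∧
          x ⬝ᵥ (Q1 *ᵥ x) ≤ t1 ∧ x ⬝ᵥ (Q2 *ᵥ x) ≤ t2) →
        t1 - t2 + 2 * (b0 ⬝ᵥ x) + d0 ≤
          xs ⬝ᵥ (Q1 *ᵥ xs) - xs ⬝ᵥ (Q2 *ᵥ xs) + 2 * (b0 ⬝ᵥ xs) + d0)) := by
  have hQ : ∀ x, x ⬝ᵥ (Q *ᵥ x) = x ⬝ᵥ (Q1 *ᵥ x) - x ⬝ᵥ (Q2 *ᵥ x) := fun x => by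
    rw [hdec, sub_mulVec, dotProduct_sub]
  -- `min Q1.rank Q2.rank - 1` truncates in `ℕ`, so `hb1`, `hb2` need both ranks positive.
  obtain ⟨⟨x1, hx1⟩, ⟨x2, hx2⟩⟩ := hindef
  have hr1 : 0 < Q1.rank := rank_pos_of_mulVec_ne_zero (x := x1) fun h => by
    have : 0 ≤ x1 ⬝ᵥ (Q2 *ᵥ x1) := by simpa using hQ2.dotProduct_mulVec_nonneg x1
    rw [hQ, h, dotProduct_zero] at hx1
    linarith
  have hr2 : 0 < Q2.rank := rank_pos_of_mulVec_ne_zero (x := x2) fun h => by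
    have : 0 ≤ x2 ⬝ᵥ (Q1 *ᵥ x2) := by simpa using hQ1.dotProduct_mulVec_nonneg x2
    rw [hQ, h, dotProduct_zero] at hx2
    linarith
  have hb : (of b).rank ≤ min Q1.rank Q2.rank - 1 := by
    rwa [← rank_transpose]
  have hb1 : (of b).rank < Q1.rank := by omega
  have hb2 : (of b).rank < Q2.rank := by omega
  simp only [hQ]
  constructor
  · rintro ⟨hfeas, hmax⟩
    refine ⟨⟨hfeas, le_rfl, le_rfl⟩, fun x t1 t2 ⟨hcons, _⟩ => ?_⟩
    obtain ⟨x', hq, hbx, hb0⟩ :=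
      hQ1.exists_dotProduct_mulVec_sub_eq_of_rank_lt hQ2 horth hb1 hb2 b0 x (t1 - t2)
    have := hmax x' (by simpa only [hq, hbx] using hcons)
    linarith
  · rintro ⟨⟨hfeas, -⟩, hmax⟩
    exact ⟨hfeas, fun x hx => hmax x _ _ ⟨hx, le_rfl, le_rfl⟩⟩

/-- for an indefinite symmetric `Q = Q₁ − Q₂` with `Q₁, Q₂ ⪰ 0` having
orthogonal ranges, and `rank [b₁ … b_p] ≤ min{rank Q₁, rank Q₂} − 1`, global maximizers
of (UQ) correspond to global maximizers of the relaxation (SOCP'), provided the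
relaxation value is `< +∞`. -/
theorem stmt10 (n p : ℕ) (Q Q1 Q2 : Matrix (Fin n) (Fin n) ℝ) (hQsymm : Q.IsSymm)
    (hindef : (∃ x : Fin n → ℝ, 0 < x ⬝ᵥ (Q *ᵥ x)) ∧ (∃ x : Fin n → ℝ, x ⬝ᵥ (Q *ᵥ x) < 0))
    (hdec : Q = Q1 - Q2) (hQ1 : Q1.PosSemidef) (hQ2 : Q2.PosSemidef)
    (horth : ∀ x y : Fin n → ℝ, (Q1 *ᵥ x) ⬝ᵥ (Q2 *ᵥ y) = 0)
    (b0 : Fin n → ℝ) (b : Fin p → Fin n → ℝ) (d0 : ℝ)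
    (l u : Fin p → EReal) (hl : ∀ i, l i ≠ ⊤) (hu : ∀ i, u i ≠ ⊥) (hlu : ∀ i, l i ≤ u i)
    (hrank : (Matrix.of fun (i : Fin n) (j : Fin p) => b j i).rank ≤
      min Q1.rank Q2.rank - 1)
    (hfin : sSup ((fun q : (Fin n → ℝ) × ℝ × ℝ =>
        ((q.2.1 - q.2.2 + 2 * (b0 ⬝ᵥ q.1) + d0 : ℝ) : EReal)) ''
      {q | (∀ i, l i ≤ ((q.2.1 - q.2.2 + 2 * (b i ⬝ᵥ q.1) : ℝ) : EReal) ∧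
              ((q.2.1 - q.2.2 + 2 * (b i ⬝ᵥ q.1) : ℝ) : EReal) ≤ u i) ∧
           q.1 ⬝ᵥ (Q1 *ᵥ q.1) ≤ q.2.1 ∧ q.1 ⬝ᵥ (Q2 *ᵥ q.1) ≤ q.2.2}) ≠ ⊤)
    (xs : Fin n → ℝ) :
    -- `xs` globally solves (UQ)
    ((∀ i, l i ≤ ((xs ⬝ᵥ (Q *ᵥ xs) + 2 * (b i ⬝ᵥ xs) : ℝ) : EReal) ∧
        ((xs ⬝ᵥ (Q *ᵥ xs) + 2 * (b i ⬝ᵥ xs) : ℝ) : EReal) ≤ u i) ∧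
      (∀ x : Fin n → ℝ,
        (∀ i, l i ≤ ((x ⬝ᵥ (Q *ᵥ x) + 2 * (b i ⬝ᵥ x) : ℝ) : EReal) ∧
            ((x ⬝ᵥ (Q *ᵥ x) + 2 * (b i ⬝ᵥ x) : ℝ) : EReal) ≤ u i) →
        x ⬝ᵥ (Q *ᵥ x) + 2 * (b0 ⬝ᵥ x) + d0 ≤ xs ⬝ᵥ (Q *ᵥ xs) + 2 * (b0 ⬝ᵥ xs) + d0)) ↔
    -- `(xs, xsᵀQ₁xs, xsᵀQ₂xs)` globally solves (SOCP')
    (((∀ i, l i ≤ ((xs ⬝ᵥ (Q1 *ᵥ xs) - xs ⬝ᵥ (Q2 *ᵥ xs) + 2 * (b i ⬝ᵥ xs) : ℝ) : EReal) ∧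
          ((xs ⬝ᵥ (Q1 *ᵥ xs) - xs ⬝ᵥ (Q2 *ᵥ xs) + 2 * (b i ⬝ᵥ xs) : ℝ) : EReal) ≤ u i) ∧
        xs ⬝ᵥ (Q1 *ᵥ xs) ≤ xs ⬝ᵥ (Q1 *ᵥ xs) ∧ xs ⬝ᵥ (Q2 *ᵥ xs) ≤ xs ⬝ᵥ (Q2 *ᵥ xs)) ∧
      (∀ (x : Fin n → ℝ) (t1 t2 : ℝ),
        ((∀ i, l i ≤ ((t1 - t2 + 2 * (b i ⬝ᵥ x) : ℝ) : EReal) ∧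
            ((t1 - t2 + 2 * (b i ⬝ᵥ x) : ℝ) : EReal) ≤ u i) ∧
          x ⬝ᵥ (Q1 *ᵥ x) ≤ t1 ∧ x ⬝ᵥ (Q2 *ᵥ x) ≤ t2) →
        t1 - t2 + 2 * (b0 ⬝ᵥ x) + d0 ≤
          xs ⬝ᵥ (Q1 *ᵥ xs) - xs ⬝ᵥ (Q2 *ᵥ xs) + 2 * (b0 ⬝ᵥ xs) + d0)) :=
  stmt10_general n p Q Q1 Q2 hindef hdec hQ1 hQ2 horth b0 b d0 l u hrank xs
end

section
/- Let a₁, …, a_p ∈ ℝⁿ and r₁, …, r_p > 0, let Ω = { x ∈ ℝⁿ : ‖x − a_i‖ ≤ r_i, i = 1, …, p }, and suppose Ω has nonempty interior. Let v(CC) = inf_{z ∈ ℝⁿ} sup_{x ∈ Ω} ‖x − z‖². For z ∈ ℝⁿ, let v(SDP(z)) be the optimal value of: minimize t over t ∈ ℝ and λ ∈ ℝᵖ with λ_i ≥ 0, subject to the (n+1)×(n+1) matrix [[(−1 + Σᵢ λ_i) I_n, z − Σᵢ λ_i a_i],[(z − Σᵢ λ_i a_i)ᵀ, t + Σᵢ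 λ_i(‖a_i‖² − r_i²)]] ⪰ 0, and let v(DCC) = inf_{z ∈ ℝⁿ} ( v(SDP(z)) + ‖z‖² ). Let γ = inf_{x ∈ ℝⁿ} max_{i = 1, …, p} ‖x − a_i‖ / r_i. Then there exists z̄ ∈ ℝⁿ such that v(DCC) ≥ sup_{x ∈ Ω} ‖x − z̄‖² ≥ v(CC) ≥ ((1 − γ)/(√2 + γ))² · v(DCC). -/
/-!
The farthest-point distance `z ↦ sup_{x ∈ Ω} ‖x − z‖` is 1-Lipschitz and coercive, so it attains
its minimum at some `z̄`. Evaluating the quadratic form of the semidefinite constraint at `(x, 1)`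
with `x ∈ Ω` gives weak duality `‖x − z‖² ≤ t + ‖z‖²`, hence `sup_Ω ‖x − z̄‖² ≤ v(SDP(z)) + ‖z‖²`
for every `z`.

For the last inequality, `z = a_i`, `λ = e_i`, `t = r_i² − ‖a_i‖²` makes the matrix zero, so
`v(DCC) ≤ r_min²`. Conversely, if `x` nearly attains `γ`, the ball about `x` of radius `(1 − γ) r_min`
lies in `Ω`, and of two antipodal points of that ball one is at distance at least `(1 − γ) r_min`
from any `z`. Thus `v(CC) ≥ (1 − γ)² r_min² ≥ ((1 − γ)/(√2 + γ))² v(DCC)`. In dimension `0` there are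
no antipodal points, but there `λ = 0` already gives `v(DCC) ≤ 0`.
-/

open Matrix

noncomputable section

/-- The `(n+1) × (n+1)` block matrix `[[M, v], [vᵀ, c]]`. -/
def blockMat {n : ℕ} (M : Matrix (Fin n) (Fin n) ℝ) (v : Fin n → ℝ) (c : ℝ) :
    Matrix (Fin n ⊕ Unit) (Fin n ⊕ Unit) ℝ :=
  Matrix.fromBlocks M (Matrix.of fun i _ => v i) (Matrix.of fun _ j => v j)
    (Matrix.of fun _ _ => c)

/-- The intersection of the balls `‖x − a_i‖ ≤ r_i`. -/
def Omega15 (n p : ℕ) (a : Fin p → Fin n → ℝ) (r : Fin p → ℝ) : Set (Fin n → ℝ) :=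
  {x | ∀ i, Real.sqrt ((x - a i) ⬝ᵥ (x - a i)) ≤ r i}

/-- Optimal value `v(SDP(z))` of the dual SDP of the inner maximization. -/
def vSDPz (n p : ℕ) (a : Fin p → Fin n → ℝ) (r : Fin p → ℝ) (z : Fin n → ℝ) : EReal :=
  sInf ((fun q : ℝ × (Fin p → ℝ) => (q.1 : EReal)) ''
    {q | (∀ i, 0 ≤ q.2 i) ∧
      (blockMat ((-1 + ∑ i, q.2 i) • (1 : Matrix (Fin n) (Fin n) ℝ))
          (z - ∑ i, q.2 i • a i)
          (q.1 + ∑ i, q.2 i * (a i ⬝ᵥ a i - (r i) ^ 2))).PosSemidef})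

/-- The value `v(DCC) = inf_z (v(SDP(z)) + ‖z‖²)`. -/
def vDCC (n p : ℕ) (a : Fin p → Fin n → ℝ) (r : Fin p → ℝ) : EReal :=
  sInf (Set.range fun z : Fin n → ℝ => vSDPz n p a r z + ((z ⬝ᵥ z : ℝ) : EReal))

/-- The Chebyshev-center value `v(CC) = inf_z sup_{x ∈ Ω} ‖x − z‖²`. -/
def vCC (n p : ℕ) (a : Fin p → Fin n → ℝ) (r : Fin p → ℝ) : EReal :=
  sInf (Set.range fun z : Fin n → ℝ =>
    sSup ((fun x : Fin n → ℝ => (((x - z) ⬝ᵥ (x - z) : ℝ) : EReal)) '' Omega15 n p a r))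

/-- `γ = inf_x max_i ‖x − a_i‖ / r_i`. -/
def gamma15 (n p : ℕ) (a : Fin p → Fin n → ℝ) (r : Fin p → ℝ) : ℝ :=
  sInf (Set.range fun x : Fin n → ℝ => ⨆ i, Real.sqrt ((x - a i) ⬝ᵥ (x - a i)) / r i)

end

open Metric

section FarthestDist

variable {α : Type*} [PseudoMetricSpace α] {S : Set α}

noncomputable def farthestDist (S : Set α) (z : α) : ℝ := sSup ((dist · z) '' S)

theorem bddAbove_image_dist (hS : Bornology.IsBounded S) (z : α) :
    BddAbove ((dist · z) '' S) := by
  obtain ⟨R, hR⟩ := hS.subset_closedBall z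
  exact ⟨R, Set.forall_mem_image.2 fun x hx => hR hx⟩

theorem dist_le_farthestDist (hS : Bornology.IsBounded S) {x : α} (hx : x ∈ S) (z : α) :
    dist x z ≤ farthestDist S z :=
  le_csSup (bddAbove_image_dist hS z) ⟨x, hx, rfl⟩

theorem farthestDist_nonneg (hne : S.Nonempty) (hS : Bornology.IsBounded S) (z : α) :
    0 ≤ farthestDist S z :=
  dist_nonneg.trans (dist_le_farthestDist hS hne.some_mem z)

theorem lipschitzWith_farthestDist (hne : S.Nonempty) (hS : Bornology.IsBounded S) :
    LipschitzWith 1 (farthestDist S) :=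
  LipschitzWith.of_le_add fun z w => csSup_le (hne.image _) <| Set.forall_mem_image.2
    fun x hx => (dist_triangle x w z).trans <| by
      rw [dist_comm w z]; gcongr; exact dist_le_farthestDist hS hx w

theorem exists_forall_farthestDist_le [ProperSpace α] (hne : S.Nonempty)
    (hS : Bornology.IsBounded S) : ∃ c, ∀ z, farthestDist S c ≤ farthestDist S z := by
  obtain ⟨x, hx⟩ := hne
  have : Nonempty α := ⟨x⟩
  refine (lipschitzWith_farthestDist ⟨x, hx⟩ hS).continuous.exists_forall_le ?_
  exact Filter.tendsto_atTop_mono (dist_le_farthestDist hS hx) (tendsto_dist_left_cocompact_atTop x)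

theorem sSup_image_coe_dist_sq (hne : S.Nonempty) (hS : Bornology.IsBounded S) (z : α) :
    sSup ((fun x => ((dist x z ^ 2 : ℝ) : EReal)) '' S) = ((farthestDist S z ^ 2 : ℝ) : EReal) := by
  have hmono : MonotoneOn (fun t : ℝ => ((t ^ 2 : ℝ) : EReal)) ((dist · z) '' S) := by
    rintro _ ⟨x, -, rfl⟩ _ ⟨y, -, rfl⟩ h
    exact EReal.coe_le_coe_iff.2 (pow_le_pow_left₀ dist_nonneg h 2)
  rw [farthestDist, hmono.map_csSup_of_continuousWithinAt
    (EReal.continuous_coe_iff.2 (continuous_pow 2)).continuousWithinAt (hne.image _)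
    (bddAbove_image_dist hS z), Set.image_image]

theorem le_farthestDist_of_closedBall_subset {E : Type*} [NormedAddCommGroup E] [NormedSpace ℝ E]
    [Nontrivial E] {S : Set E} (hS : Bornology.IsBounded S) {y : E} {ρ : ℝ} (hρ : 0 ≤ ρ)
    (hball : closedBall y ρ ⊆ S) (z : E) : ρ ≤ farthestDist S z := by
  obtain ⟨u, hu⟩ := exists_norm_eq E hρ
  have hmem : ∀ v : E, ‖v‖ = ρ → y + v ∈ S := fun v hv =>
    hball (by rw [mem_closedBall, dist_eq_norm, add_sub_cancel_left, hv])
  have h₁ := dist_le_farthestDist hS (hmem u hu) z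
  have h₂ := dist_le_farthestDist hS (hmem (-u) (by rw [norm_neg, hu])) z
  have h₃ : 2 * ρ ≤ dist (y + u) z + dist (y + -u) z := by
    calc 2 * ρ = dist (y + u) (y + -u) := by
          rw [dist_eq_norm, add_sub_add_left_eq_sub, sub_neg_eq_add, ← two_smul ℝ u, norm_smul,
            hu, Real.norm_two]
      _ ≤ _ := dist_triangle_right _ _ z
  linarith

end FarthestDist

section DotProduct

variable {ι : Type*} [Fintype ι]

theorem dotProduct_sub_self_eq_dist_sq (x y : ι → ℝ) :
    (x - y) ⬝ᵥ (x - y) = dist (WithLp.toLp 2 x) (WithLp.toLp 2 y) ^ 2 := by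
  rw [EuclideanSpace.dist_sq_eq]
  simp [dotProduct, Real.dist_eq, sq]

theorem sqrt_dotProduct_sub_self (x y : ι → ℝ) :
    √((x - y) ⬝ᵥ (x - y)) = dist (WithLp.toLp 2 x) (WithLp.toLp 2 y) := by
  rw [dotProduct_sub_self_eq_dist_sq, Real.sqrt_sq dist_nonneg]

end DotProduct

theorem blockMat_quadForm {n : ℕ} (M : Matrix (Fin n) (Fin n) ℝ) (v : Fin n → ℝ) (c : ℝ)
    (x : Fin n → ℝ) :
    Sum.elim x 1 ⬝ᵥ blockMat M v c *ᵥ Sum.elim x 1 = x ⬝ᵥ M *ᵥ x + 2 * (v ⬝ᵥ x) + c := by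
  have hB : (of fun i (_ : Unit) => v i) *ᵥ (1 : Unit → ℝ) = v := by ext; simp [mulVec]
  have hC : (of fun (_ : Unit) j => v j) *ᵥ x = fun _ => v ⬝ᵥ x := by ext; simp [mulVec]
  have hD : (of fun (_ : Unit) (_ : Unit) => c) *ᵥ (1 : Unit → ℝ) = fun _ => c := by
    ext; simp [mulVec]
  rw [blockMat, fromBlocks_mulVec, sumElim_dotProduct_sumElim]
  simp only [Sum.elim_comp_inl, Sum.elim_comp_inr, hB, hC, hD, dotProduct_add]
  simp only [dotProduct_comm x v, dotProduct_pUnit, Pi.one_apply, one_mul]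
  ring

section ChebyshevCenter

variable {n p : ℕ} (a : Fin p → Fin n → ℝ) (r : Fin p → ℝ)

def sdpMatrix (z : Fin n → ℝ) (t : ℝ) (lam : Fin p → ℝ) :
    Matrix (Fin n ⊕ Unit) (Fin n ⊕ Unit) ℝ :=
  blockMat ((-1 + ∑ i, lam i) • (1 : Matrix (Fin n) (Fin n) ℝ)) (z - ∑ i, lam i • a i)
    (t + ∑ i, lam i * (a i ⬝ᵥ a i - (r i) ^ 2))

theorem sdpMatrix_quadForm (z x : Fin n → ℝ) (t : ℝ) (lam : Fin p → ℝ) :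
    Sum.elim x 1 ⬝ᵥ sdpMatrix a r z t lam *ᵥ Sum.elim x 1
      = t + z ⬝ᵥ z - (x - z) ⬝ᵥ (x - z) + ∑ i, lam i * ((x - a i) ⬝ᵥ (x - a i) - r i ^ 2) := by
  simp only [sdpMatrix, blockMat_quadForm, smul_mulVec, one_mulVec, dotProduct_smul,
    sub_dotProduct, dotProduct_sub, sum_dotProduct, smul_dotProduct, smul_eq_mul, mul_sub,
    Finset.sum_sub_distrib, Finset.sum_mul, add_mul]
  simp only [dotProduct_comm z x, dotProduct_comm (a _) x]
  ring

theorem sq_dist_le_of_feasible {z x : Fin n → ℝ} {t : ℝ} {lam : Fin p → ℝ}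
    (hlam : ∀ i, 0 ≤ lam i) (hpsd : (sdpMatrix a r z t lam).PosSemidef)
    (hx : x ∈ Omega15 n p a r) : (x - z) ⬝ᵥ (x - z) ≤ t + z ⬝ᵥ z := by
  have hquad := hpsd.dotProduct_mulVec_nonneg (Sum.elim x 1)
  rw [star_trivial, sdpMatrix_quadForm] at hquad
  have hsum : ∑ i, lam i * ((x - a i) ⬝ᵥ (x - a i) - r i ^ 2) ≤ 0 :=
    Finset.sum_nonpos fun i _ => mul_nonpos_of_nonneg_of_nonpos (hlam i)
      (sub_nonpos.2 (Real.sqrt_le_iff.1 (hx i)).2)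
  linarith

noncomputable def maxSqDist (z : Fin n → ℝ) : EReal :=
  sSup ((fun x : Fin n → ℝ => (((x - z) ⬝ᵥ (x - z) : ℝ) : EReal)) '' Omega15 n p a r)

theorem maxSqDist_le_vSDPz_add (z : Fin n → ℝ) :
    maxSqDist a r z ≤ vSDPz n p a r z + ((z ⬝ᵥ z : ℝ) : EReal) := by
  refine sSup_le (Set.forall_mem_image.2 fun x hx => ?_)
  have hdual : (((x - z) ⬝ᵥ (x - z) - z ⬝ᵥ z : ℝ) : EReal) ≤ vSDPz n p a r z :=
    le_sInf <| Set.forall_mem_image.2 fun q hq => EReal.coe_le_coe_iff.2 <| by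
      linarith [sq_dist_le_of_feasible a r hq.1 hq.2 hx]
  calc (((x - z) ⬝ᵥ (x - z) : ℝ) : EReal)
      = (((x - z) ⬝ᵥ (x - z) - z ⬝ᵥ z : ℝ) : EReal) + ((z ⬝ᵥ z : ℝ) : EReal) := by
        rw [← EReal.coe_add, sub_add_cancel]
    _ ≤ _ := by gcongr

theorem vDCC_le_of_feasible {z : Fin n → ℝ} {t : ℝ} {lam : Fin p → ℝ}
    (hlam : ∀ i, 0 ≤ lam i) (hpsd : (sdpMatrix a r z t lam).PosSemidef) :
    vDCC n p a r ≤ ((t + z ⬝ᵥ z : ℝ) : EReal) :=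
  calc vDCC n p a r ≤ vSDPz n p a r z + ((z ⬝ᵥ z : ℝ) : EReal) := sInf_le ⟨z, rfl⟩
    _ ≤ (t : EReal) + ((z ⬝ᵥ z : ℝ) : EReal) := by
        gcongr; exact sInf_le ⟨(t, lam), ⟨hlam, hpsd⟩, rfl⟩
    _ = _ := (EReal.coe_add _ _).symm

theorem vDCC_le_sq (i : Fin p) : vDCC n p a r ≤ ((r i ^ 2 : ℝ) : EReal) := by
  have hzero : sdpMatrix a r (a i) (r i ^ 2 - a i ⬝ᵥ a i) (Pi.single i 1) = 0 := by
    ext (i | i) (j | j) <;> simp [sdpMatrix, blockMat, Pi.single_apply]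
  have hlam : ∀ j, 0 ≤ (Pi.single i 1 : Fin p → ℝ) j := fun j => by
    by_cases h : j = i <;> simp [h]
  have hle := vDCC_le_of_feasible a r hlam (hzero ▸ PosSemidef.zero)
  rwa [sub_add_cancel] at hle

end ChebyshevCenter

theorem vDCC_zero_dim_nonpos {p : ℕ} (a : Fin p → Fin 0 → ℝ) (r : Fin p → ℝ) :
    vDCC 0 p a r ≤ 0 := by
  have hzero : sdpMatrix a r 0 0 0 = 0 := by
    ext (i | i) (j | j)
    exacts [i.elim0, i.elim0, j.elim0, by simp [sdpMatrix, blockMat]]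
  have hle := vDCC_le_of_feasible a r (fun _ => le_rfl) (hzero ▸ PosSemidef.zero)
  simpa using hle

section BallInter

variable {n p : ℕ} (a : Fin p → Fin n → ℝ) (r : Fin p → ℝ)

def ballInter : Set (EuclideanSpace ℝ (Fin n)) :=
  ⋂ i, closedBall (WithLp.toLp 2 (a i)) (r i)

theorem Omega15_eq_preimage_ballInter :
    Omega15 n p a r = WithLp.toLp 2 ⁻¹' ballInter a r := by
  ext x
  simp only [Omega15, ballInter, sqrt_dotProduct_sub_self, Set.mem_ofPred_eq, Set.mem_preimage,
    Set.mem_iInter, mem_closedBall]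

variable [Nonempty (Fin p)]

theorem isBounded_ballInter : Bornology.IsBounded (ballInter a r) :=
  isBounded_closedBall.subset (Set.iInter_subset _ (Classical.arbitrary _))

variable {a r} (hne : (ballInter a r).Nonempty)
include hne

theorem maxSqDist_eq (z : Fin n → ℝ) :
    maxSqDist a r z = ((farthestDist (ballInter a r) (WithLp.toLp 2 z) ^ 2 : ℝ) : EReal) := by
  rw [← sSup_image_coe_dist_sq hne (isBounded_ballInter a r), maxSqDist,
    Omega15_eq_preimage_ballInter]
  simp_rw [dotProduct_sub_self_eq_dist_sq]
  rw [← Set.image_image (fun y => ((dist y (WithLp.toLp 2 z) ^ 2 : ℝ) : EReal)),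
    Set.image_preimage_eq _ (WithLp.toLp_surjective 2)]

theorem exists_forall_maxSqDist_le : ∃ c, ∀ z, maxSqDist a r c ≤ maxSqDist a r z := by
  obtain ⟨c, hc⟩ := exists_forall_farthestDist_le hne (isBounded_ballInter a r)
  refine ⟨c.ofLp, fun z => ?_⟩
  rw [maxSqDist_eq hne, maxSqDist_eq hne, WithLp.toLp_ofLp]
  exact EReal.coe_le_coe_iff.2 <|
    pow_le_pow_left₀ (farthestDist_nonneg hne (isBounded_ballInter a r) _) (hc _) 2

theorem sq_le_vCC_of_le_farthestDist {B : ℝ} (hB : 0 ≤ B)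
    (h : ∀ z, B ≤ farthestDist (ballInter a r) z) : ((B ^ 2 : ℝ) : EReal) ≤ vCC n p a r :=
  le_sInf <| Set.forall_mem_range.2 fun z => by
    rw [← maxSqDist, maxSqDist_eq hne]
    exact EReal.coe_le_coe_iff.2 (pow_le_pow_left₀ hB (h _) 2)

end BallInter

section Gamma

variable {n p : ℕ} (a : Fin p → Fin n → ℝ) {r : Fin p → ℝ} (hr : ∀ i, 0 < r i)
include hr

theorem gamma15_nonneg : 0 ≤ gamma15 n p a r :=
  Real.sInf_nonneg <| Set.forall_mem_range.2 fun _ =>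
    Real.iSup_nonneg fun i => div_nonneg (Real.sqrt_nonneg _) (hr i).le

theorem gamma15_le_one {x : Fin n → ℝ} (hx : x ∈ Omega15 n p a r) : gamma15 n p a r ≤ 1 :=
  (csInf_le ⟨0, Set.forall_mem_range.2 fun _ =>
      Real.iSup_nonneg fun i => div_nonneg (Real.sqrt_nonneg _) (hr i).le⟩ ⟨x, rfl⟩).trans <|
    Real.iSup_le (fun i => (div_le_one (hr i)).2 (hx i)) zero_le_one

theorem one_sub_gamma15_mul_le_farthestDist [Nonempty (Fin n)] [Nonempty (Fin p)]
    (hne : (ballInter a r).Nonempty) {i₀ : Fin p} (hi₀ : ∀ i, r i₀ ≤ r i)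
    (z : EuclideanSpace ℝ (Fin n)) :
    (1 - gamma15 n p a r) * r i₀ ≤ farthestDist (ballInter a r) z := by
  refine le_of_forall_pos_le_add fun ε hε => ?_
  obtain ⟨_, ⟨x, rfl⟩, hx⟩ := exists_lt_of_csInf_lt (Set.range_nonempty _)
    (lt_add_of_pos_right (gamma15 n p a r) (div_pos hε (hr i₀)))
  set δ := gamma15 n p a r + ε / r i₀
  have hdist : ∀ i, dist (WithLp.toLp 2 x) (WithLp.toLp 2 (a i)) ≤ δ * r i := fun i => by
    rw [← sqrt_dotProduct_sub_self, ← div_le_iff₀ (hr i)]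
    exact (le_ciSup (Set.finite_range _).bddAbove i).trans hx.le
  have hsplit : (1 - gamma15 n p a r) * r i₀ = (1 - δ) * r i₀ + ε := by
    have hr₀ := (hr i₀).ne'
    simp only [δ]
    field_simp
    ring
  rw [hsplit]
  gcongr
  rcases lt_or_ge 1 δ with hδ | hδ
  · exact (mul_nonpos_of_nonpos_of_nonneg (by linarith) (hr i₀).le).trans
      (farthestDist_nonneg hne (isBounded_ballInter a r) z)
  · refine le_farthestDist_of_closedBall_subset (y := WithLp.toLp 2 x) (isBounded_ballInter a r)
      (mul_nonneg (sub_nonneg.2 hδ) (hr i₀).le) (Set.subset_iInter fun i => ?_) z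
    refine closedBall_subset_closedBall' ?_
    calc (1 - δ) * r i₀ + dist (WithLp.toLp 2 x) (WithLp.toLp 2 (a i))
        ≤ (1 - δ) * r i + δ * r i := by gcongr; exacts [hi₀ i, hdist i]
      _ = r i := by ring

end Gamma

theorem sq_div_sqrt_two_add_le {γ : ℝ} (hγ : 0 ≤ γ) :
    ((1 - γ) / (√2 + γ)) ^ 2 ≤ (1 - γ) ^ 2 := by
  rw [div_pow]
  exact div_le_self (sq_nonneg _) (one_le_pow₀ (by linarith [Real.one_lt_sqrt_two]))

theorem sq_div_sqrt_two_add_mul_vDCC_le_vCC {n p : ℕ} [Nonempty (Fin p)]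
    {a : Fin p → Fin n → ℝ} {r : Fin p → ℝ} (hr : ∀ i, 0 < r i) (hne : (ballInter a r).Nonempty)
    (hγ₁ : gamma15 n p a r ≤ 1) :
    ((((1 - gamma15 n p a r) / (√2 + gamma15 n p a r)) ^ 2 : ℝ) : EReal) * vDCC n p a r
      ≤ vCC n p a r := by
  set γ := gamma15 n p a r
  have hc₀ : (0 : EReal) ≤ ((((1 - γ) / (√2 + γ)) ^ 2 : ℝ) : EReal) :=
    EReal.coe_nonneg.2 (sq_nonneg _)
  obtain rfl | hn := n.eq_zero_or_pos
  · calc _ ≤ ((((1 - γ) / (√2 + γ)) ^ 2 : ℝ) : EReal) * 0 :=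
          mul_le_mul_of_nonneg_left (vDCC_zero_dim_nonpos a r) hc₀
      _ = ((0 ^ 2 : ℝ) : EReal) := by simp
      _ ≤ _ := sq_le_vCC_of_le_farthestDist hne le_rfl
          (farthestDist_nonneg hne (isBounded_ballInter a r))
  · have : Nonempty (Fin n) := ⟨⟨0, hn⟩⟩
    obtain ⟨i₀, hi₀⟩ := Finite.exists_min r
    calc _ ≤ ((((1 - γ) / (√2 + γ)) ^ 2 : ℝ) : EReal) * ((r i₀ ^ 2 : ℝ) : EReal) :=
          mul_le_mul_of_nonneg_left (vDCC_le_sq a r i₀) hc₀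
      _ ≤ ((((1 - γ) * r i₀) ^ 2 : ℝ) : EReal) := by
          rw [← EReal.coe_mul, mul_pow]
          exact EReal.coe_le_coe_iff.2 <|
            mul_le_mul_of_nonneg_right (sq_div_sqrt_two_add_le (gamma15_nonneg a hr)) (sq_nonneg _)
      _ ≤ _ := sq_le_vCC_of_le_farthestDist hne (mul_nonneg (sub_nonneg.2 hγ₁) (hr i₀).le)
          (one_sub_gamma15_mul_le_farthestDist a hr hne hi₀)

/-- approximation bound for Beck's convex relaxation of the Chebyshev
center problem: there is `z̄` with
`v(DCC) ≥ sup_{x∈Ω} ‖x − z̄‖² ≥ v(CC) ≥ ((1−γ)/(√2+γ))² · v(DCC)`. -/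
theorem stmt15 (n p : ℕ) (hp : 0 < p)
    (a : Fin p → Fin n → ℝ) (r : Fin p → ℝ) (hr : ∀ i, 0 < r i)
    (hint : ∃ x : Fin n → ℝ, ∀ i, Real.sqrt ((x - a i) ⬝ᵥ (x - a i)) < r i) :
    ∃ zbar : Fin n → ℝ,
      sSup ((fun x : Fin n → ℝ => (((x - zbar) ⬝ᵥ (x - zbar) : ℝ) : EReal)) ''
          Omega15 n p a r) ≤ vDCC n p a r ∧
      vCC n p a r ≤
        sSup ((fun x : Fin n → ℝ => (((x - zbar) ⬝ᵥ (x - zbar) : ℝ) : EReal)) ''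
          Omega15 n p a r) ∧
      ((((1 - gamma15 n p a r) / (Real.sqrt 2 + gamma15 n p a r)) ^ 2 : ℝ) : EReal)
          * vDCC n p a r ≤ vCC n p a r := by
  have : Nonempty (Fin p) := ⟨⟨0, hp⟩⟩
  obtain ⟨x₀, hx₀⟩ := hint
  have hΩ : x₀ ∈ Omega15 n p a r := fun i => (hx₀ i).le
  have hne : (ballInter a r).Nonempty := ⟨_, (Omega15_eq_preimage_ballInter a r ▸ hΩ :)⟩
  obtain ⟨zbar, hzbar⟩ := exists_forall_maxSqDist_le hne
  have hupper : maxSqDist a r zbar ≤ vDCC n p a r :=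
    le_sInf <| Set.forall_mem_range.2 fun z => (hzbar z).trans (maxSqDist_le_vSDPz_add a r z)
  exact ⟨zbar, hupper, sInf_le ⟨zbar, rfl⟩,
    sq_div_sqrt_two_add_mul_vDCC_le_vCC hr hne (gamma15_le_one a hr hΩ)⟩
end

section
/- Let n ≥ 1, a₁, …, a_p ∈ ℝⁿ and r₁, …, r_p > 0. Let d_max = max_{i,j = 1, …, p} ‖a_i − a_j‖ and r_min = min_{i = 1, …, p} r_i. Then inf_{x ∈ ℝⁿ} max_{i = 1, …, p} ‖x − a_i‖ / r_i ≤ √(n / (2(n + 1))) · d_max / r_min, and in particular this infimum is strictly less than d_max / (√2 · r_min) when d_max > 0. -/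
/-!
Jung's theorem. Let `c` minimise `x ↦ maxᵢ ‖x - aᵢ‖`, with optimal value `R`. Then `c` lies in the
convex hull of the points at distance exactly `R`: otherwise a hyperplane separates `c` from them,
and moving `c` a little towards that hyperplane brings it strictly closer to every `aᵢ`. By
Carathéodory, `c = ∑ₖ wₖ zₖ` for at most `n + 1` such points `zₖ`, and the variance identity
`∑ₖ ∑ₗ wₖ wₗ ‖zₖ - zₗ‖² = 2 ∑ₖ wₖ ‖zₖ - c‖² = 2R²` together with `‖zₖ - zₗ‖ ≤ d` gives
`2R² ≤ (1 - ∑ₖ wₖ²) d² ≤ (1 - 1/(n+1)) d²`.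
-/

open Filter Topology RealInnerProductSpace

section MinimaxCenter

variable {α ι : Type*} [PseudoMetricSpace α] [Fintype ι]

theorem continuous_iSup_dist [Nonempty ι] (a : ι → α) : Continuous fun x => ⨆ i, dist x (a i) := by
  simp_rw [← Finset.sup'_univ_eq_ciSup]
  exact Continuous.finset_sup'_apply Finset.univ_nonempty fun i _ =>
    continuous_id.dist continuous_const

theorem dist_le_iSup_dist (a : ι → α) (x : α) (i : ι) : dist x (a i) ≤ ⨆ j, dist x (a j) :=
  le_ciSup (f := fun j => dist x (a j)) (Set.finite_range _).bddAbove i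

theorem exists_forall_iSup_dist_le [Nonempty ι] [ProperSpace α] (a : ι → α) :
    ∃ c, ∀ x, ⨆ i, dist c (a i) ≤ ⨆ i, dist x (a i) := by
  obtain ⟨i₀⟩ := ‹Nonempty ι›
  have : Nonempty α := ⟨a i₀⟩
  refine (continuous_iSup_dist a).exists_forall_le ?_
  exact tendsto_atTop_mono (fun x => dist_le_iSup_dist a x i₀)
    (tendsto_dist_right_cocompact_atTop _)

end MinimaxCenter

section InnerProductSpace

variable {E : Type*} [NormedAddCommGroup E] [InnerProductSpace ℝ E]

theorem dist_add_smul_sq (c b v : E) (t : ℝ) :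
    dist (c + t • v) b ^ 2 = dist c b ^ 2 - t * (2 * ⟪v, b - c⟫ - t * ‖v‖ ^ 2) := by
  rw [dist_eq_norm, dist_eq_norm, show c + t • v - b = (c - b) + t • v by abel, norm_add_sq_real,
    real_inner_smul_right, norm_smul, mul_pow, Real.norm_eq_abs, sq_abs,
    ← neg_sub b c, inner_neg_left, real_inner_comm]
  ring

theorem eventually_dist_add_smul_lt_of_inner_pos {c b v : E} (h : 0 < ⟪v, b - c⟫) :
    ∀ᶠ t in 𝓝[>] (0 : ℝ), dist (c + t • v) b < dist c b := by
  have hsmall : ∀ᶠ t in 𝓝 (0 : ℝ), t * ‖v‖ ^ 2 < 2 * ⟪v, b - c⟫ := by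
    refine Tendsto.eventually_lt_const (v := 0) (by linarith) ?_
    exact (continuous_id.mul continuous_const).tendsto' 0 0 (zero_mul _)
  filter_upwards [nhdsWithin_le_nhds hsmall, self_mem_nhdsWithin] with t ht (htpos : 0 < t)
  refine lt_of_pow_lt_pow_left₀ 2 dist_nonneg ?_
  rw [dist_add_smul_sq]
  nlinarith

theorem eventually_dist_add_smul_lt {c b : E} (v : E) {R : ℝ} (h : dist c b < R) :
    ∀ᶠ t in 𝓝 (0 : ℝ), dist (c + t • v) b < R := by
  refine Tendsto.eventually_lt_const h ?_
  have : Continuous fun t : ℝ => dist (c + t • v) b := by fun_prop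
  simpa using this.tendsto 0

theorem mem_convexHull_of_forall_iSup_dist_le [CompleteSpace E] {ι : Type*} [Fintype ι]
    [Nonempty ι] {a : ι → E} {c : E}
    (hc : ∀ x, ⨆ i, dist c (a i) ≤ ⨆ i, dist x (a i)) :
    c ∈ convexHull ℝ (a '' {i | dist c (a i) = ⨆ j, dist c (a j)}) := by
  set R := ⨆ j, dist c (a j)
  by_contra hnot
  obtain ⟨f, u, hfc, hfS⟩ := geometric_hahn_banach_point_closed (convex_convexHull ℝ _)
    ((Set.toFinite _).isCompact_convexHull (𝕜 := ℝ)).isClosed hnot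
  set v := (InnerProductSpace.toDual ℝ E).symm f
  have hv : ∀ i, dist c (a i) = R → 0 < ⟪v, a i - c⟫ := fun i hi => by
    have := hfS _ (subset_convexHull ℝ _ ⟨i, hi, rfl⟩)
    rw [inner_sub_right, InnerProductSpace.toDual_symm_apply, InnerProductSpace.toDual_symm_apply]
    linarith
  have hmove : ∀ᶠ t in 𝓝[>] (0 : ℝ), ∀ i, dist (c + t • v) (a i) < R := by
    refine eventually_all.2 fun i => ?_
    rcases (dist_le_iSup_dist a c i).eq_or_lt with hi | hi
    · simpa [hi] using eventually_dist_add_smul_lt_of_inner_pos (hv i hi)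
    · exact nhdsWithin_le_nhds (eventually_dist_add_smul_lt v hi)
  obtain ⟨t, ht⟩ := hmove.exists
  obtain ⟨i, hi⟩ := exists_eq_ciSup_of_finite (f := fun i => dist (c + t • v) (a i))
  exact (hc (c + t • v)).not_gt (hi ▸ ht i)

variable {κ : Type*} [Fintype κ]

theorem sum_sum_mul_norm_sub_sq {w : κ → ℝ} {z : κ → E} {c : E} (hw : ∑ k, w k = 1)
    (hc : ∑ k, w k • z k = c) :
    ∑ k, ∑ l, w k * w l * ‖z k - z l‖ ^ 2 = 2 * ∑ k, w k * ‖z k - c‖ ^ 2 := by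
  set u := fun k => z k - c
  have hu : ∑ l, w l • u l = 0 := by
    simp only [u, smul_sub, Finset.sum_sub_distrib, hc, ← Finset.sum_smul, hw, one_smul, sub_self]
  have hinner : ∀ k, ∑ l, w l * ‖u k - u l‖ ^ 2 = ‖u k‖ ^ 2 + ∑ l, w l * ‖u l‖ ^ 2 := fun k => by
    have : ∀ l, w l * ‖u k - u l‖ ^ 2 =
        w l * ‖u k‖ ^ 2 + w l * ‖u l‖ ^ 2 - 2 * ⟪u k, w l • u l⟫ := fun l => by
      rw [norm_sub_sq_real, real_inner_smul_right]; ring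
    simp only [this, Finset.sum_sub_distrib, Finset.sum_add_distrib, ← Finset.mul_sum,
      ← inner_sum, hu, inner_zero_right, ← Finset.sum_mul, hw]
    ring
  calc ∑ k, ∑ l, w k * w l * ‖z k - z l‖ ^ 2
      = ∑ k, w k * ∑ l, w l * ‖u k - u l‖ ^ 2 := by
        simp only [u, sub_sub_sub_cancel_right, Finset.mul_sum, mul_assoc]
    _ = 2 * ∑ k, w k * ‖z k - c‖ ^ 2 := by
        simp only [hinner, mul_add, Finset.sum_add_distrib, ← Finset.sum_mul, hw, u]
        ring

theorem one_div_le_sum_sq_of_card_le {w : κ → ℝ} (hw : ∑ k, w k = 1) {m : ℕ}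
    (hm : Fintype.card κ ≤ m) : 1 / (m : ℝ) ≤ ∑ k, w k ^ 2 := by
  have h := sq_sum_le_card_mul_sum_sq (s := Finset.univ) (f := w)
  rw [hw, one_pow, Finset.card_univ] at h
  have : Nonempty κ := by
    by_contra h'
    simp [not_nonempty_iff.mp h'] at hw
  have hcard : (0 : ℝ) < Fintype.card κ := by exact_mod_cast Fintype.card_pos
  calc 1 / (m : ℝ) ≤ 1 / Fintype.card κ := one_div_le_one_div_of_le hcard (by exact_mod_cast hm)
    _ ≤ ∑ k, w k ^ 2 := by rw [div_le_iff₀ hcard]; linarith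

theorem two_mul_sq_le_of_sum_smul_eq {w : κ → ℝ} {z : κ → E} {c : E} {R d : ℝ}
    (hw₀ : ∀ k, 0 ≤ w k) (hw : ∑ k, w k = 1) (hc : ∑ k, w k • z k = c)
    (hR : ∀ k, ‖z k - c‖ = R) (hd : ∀ k l, ‖z k - z l‖ ≤ d) {m : ℕ} (hm : Fintype.card κ ≤ m) :
    2 * R ^ 2 ≤ (1 - 1 / m) * d ^ 2 := by
  have hdiag : ∑ k, w k ^ 2 * d ^ 2 ≤ ∑ k, ∑ l, w k * w l * (d ^ 2 - ‖z k - z l‖ ^ 2) := by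
    refine Finset.sum_le_sum fun k _ => ?_
    convert Finset.single_le_sum (f := fun l => w k * w l * (d ^ 2 - ‖z k - z l‖ ^ 2))
      (fun l _ => mul_nonneg (mul_nonneg (hw₀ k) (hw₀ l))
        (sub_nonneg.2 (pow_le_pow_left₀ (norm_nonneg _) (hd k l) 2))) (Finset.mem_univ k) using 1
    simp only [sub_self, norm_zero]; ring
  have hsplit : ∑ k, ∑ l, w k * w l * (d ^ 2 - ‖z k - z l‖ ^ 2) = d ^ 2 - 2 * R ^ 2 := by
    simp only [mul_sub, Finset.sum_sub_distrib, sum_sum_mul_norm_sub_sq hw hc, hR,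
      ← Finset.sum_mul, ← Finset.mul_sum, hw]
    ring
  have := mul_le_mul_of_nonneg_right (one_div_le_sum_sq_of_card_le hw hm) (sq_nonneg d)
  rw [← Finset.sum_mul, hsplit] at hdiag
  linarith

theorem exists_dist_le_sqrt_finrank_mul [FiniteDimensional ℝ E] {ι : Type*} [Fintype ι]
    [Nonempty ι] (a : ι → E) {d : ℝ} (hd : ∀ i j, dist (a i) (a j) ≤ d) :
    ∃ c, ∀ i, dist c (a i) ≤
      √(Module.finrank ℝ E / (2 * (Module.finrank ℝ E + 1))) * d := by
  obtain ⟨c, hc⟩ := exists_forall_iSup_dist_le a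
  set R := ⨆ i, dist c (a i)
  obtain ⟨κ, _, z, w, hzS, hz, hw₀, hw, hwz⟩ :=
    eq_pos_convex_span_of_mem_convexHull (mem_convexHull_of_forall_iSup_dist_le hc)
  have hzR : ∀ k, ‖z k - c‖ = R := fun k => by
    obtain ⟨i, hi, hzi⟩ := hzS (Set.mem_range_self k)
    rw [← hzi, ← dist_eq_norm, dist_comm, hi]
  have hzd : ∀ k l, ‖z k - z l‖ ≤ d := fun k l => by
    obtain ⟨i, -, hzi⟩ := hzS (Set.mem_range_self k)
    obtain ⟨j, -, hzj⟩ := hzS (Set.mem_range_self l)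
    rw [← hzi, ← hzj, ← dist_eq_norm]
    exact hd i j
  have hcard : Fintype.card κ ≤ Module.finrank ℝ E + 1 :=
    hz.card_le_finrank_succ.trans (Nat.succ_le_succ (Submodule.finrank_le _))
  have hR : R ^ 2 ≤ Module.finrank ℝ E / (2 * (Module.finrank ℝ E + 1)) * d ^ 2 := by
    have h := two_mul_sq_le_of_sum_smul_eq (fun k => (hw₀ k).le) hw hwz hzR hzd hcard
    have hn : (Module.finrank ℝ E : ℝ) / (2 * (Module.finrank ℝ E + 1)) =
        (1 - 1 / ((Module.finrank ℝ E + 1 : ℕ) : ℝ)) / 2 := by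
      push_cast; field_simp; ring
    rw [hn]
    linarith
  have hR₀ : 0 ≤ R := dist_nonneg.trans (dist_le_iSup_dist a c (Classical.arbitrary ι))
  refine ⟨c, fun i => (dist_le_iSup_dist a c i).trans ?_⟩
  refine (pow_le_pow_iff_left₀ hR₀ ?_ two_ne_zero).1 ?_
  · exact mul_nonneg (Real.sqrt_nonneg _) (dist_nonneg.trans (hd i i))
  · rwa [mul_pow, Real.sq_sqrt (by positivity)]

end InnerProductSpace

theorem iSup_div_le_div_iInf {ι : Type*} [Finite ι] [Nonempty ι] {f r : ι → ℝ}
    (hf : ∀ i, 0 ≤ f i) (hr : ∀ i, 0 < r i) {B : ℝ} (hB : ∀ i, f i ≤ B) :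
    ⨆ i, f i / r i ≤ B / ⨅ i, r i := by
  obtain ⟨i₀, hi₀⟩ : ∃ i, r i = ⨅ i, r i := exists_eq_ciInf_of_finite
  refine ciSup_le fun i => div_le_div₀ ((hf i).trans (hB i)) (hB i) (hi₀ ▸ hr i₀) ?_
  exact ciInf_le (Set.finite_range _).bddBelow i

theorem sqrt_div_two_mul_add_one_lt {x : ℝ} (hx : 0 ≤ x) : √(x / (2 * (x + 1))) < (√2)⁻¹ := by
  rw [← Real.sqrt_inv]
  refine Real.sqrt_lt_sqrt (by positivity) ?_
  rw [div_lt_iff₀ (by positivity)]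
  linarith

theorem sqrt_dotProduct_sub_self_eq_dist {ι : Type*} [Fintype ι] (x y : ι → ℝ) :
    √((x - y) ⬝ᵥ (x - y)) = dist (WithLp.toLp 2 x) (WithLp.toLp 2 y) := by
  rw [EuclideanSpace.dist_eq]
  congr 1
  simp [dotProduct, Real.dist_eq, sq]

theorem stmt16_general (n p : ℕ) (hp : 0 < p)
    (a : Fin p → Fin n → ℝ) (r : Fin p → ℝ) (hr : ∀ i, 0 < r i) :
    sInf (Set.range fun x : Fin n → ℝ =>
        ⨆ i, Real.sqrt ((x - a i) ⬝ᵥ (x - a i)) / r i) ≤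
      Real.sqrt ((n : ℝ) / (2 * ((n : ℝ) + 1))) *
        (⨆ q : Fin p × Fin p, Real.sqrt ((a q.1 - a q.2) ⬝ᵥ (a q.1 - a q.2))) /
        (⨅ i, r i) ∧
    (0 < (⨆ q : Fin p × Fin p, Real.sqrt ((a q.1 - a q.2) ⬝ᵥ (a q.1 - a q.2))) →
      sInf (Set.range fun x : Fin n → ℝ =>
          ⨆ i, Real.sqrt ((x - a i) ⬝ᵥ (x - a i)) / r i) <
        (⨆ q : Fin p × Fin p, Real.sqrt ((a q.1 - a q.2) ⬝ᵥ (a q.1 - a q.2))) /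
          (Real.sqrt 2 * (⨅ i, r i))) := by
  have : Nonempty (Fin p) := Fin.pos_iff_nonempty.mp hp
  simp only [sqrt_dotProduct_sub_self_eq_dist]
  set b := fun i => WithLp.toLp 2 (a i)
  set D := ⨆ q : Fin p × Fin p, dist (b q.1) (b q.2)
  have hD : ∀ i j, dist (b i) (b j) ≤ D := fun i j =>
    le_ciSup (f := fun q : Fin p × Fin p => dist (b q.1) (b q.2)) (Set.finite_range _).bddAbove
      (i, j)
  obtain ⟨c, hc⟩ := exists_dist_le_sqrt_finrank_mul b hD
  rw [finrank_euclideanSpace_fin] at hc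
  have hbound : sInf (Set.range fun x : Fin n → ℝ => ⨆ i, dist (WithLp.toLp 2 x) (b i) / r i) ≤
      √((n : ℝ) / (2 * (n + 1))) * D / ⨅ i, r i := by
    refine csInf_le_of_le ⟨0, ?_⟩ ⟨c.ofLp, rfl⟩ (iSup_div_le_div_iInf (fun _ => dist_nonneg) hr hc)
    rintro _ ⟨x, rfl⟩
    exact Real.iSup_nonneg fun i => div_nonneg dist_nonneg (hr i).le
  refine ⟨hbound, fun hD₀ => hbound.trans_lt ?_⟩
  have hρ : 0 < ⨅ i, r i := by
    obtain ⟨i₀, hi₀⟩ : ∃ i, r i = ⨅ i, r i := exists_eq_ciInf_of_finite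
    exact hi₀ ▸ hr i₀
  calc √((n : ℝ) / (2 * (n + 1))) * D / ⨅ i, r i < (√2)⁻¹ * D / ⨅ i, r i := by
        gcongr; exact sqrt_div_two_mul_add_one_lt n.cast_nonneg
    _ = D / (√2 * ⨅ i, r i) := by rw [inv_mul_eq_div, div_div]

/-- `inf_x max_i ‖x − a_i‖ / r_i ≤ √(n/(2(n+1))) · d_max / r_min`, and in
particular the infimum is `< d_max/(√2 r_min)` when `d_max > 0`. -/
theorem stmt16 (n p : ℕ) (hn : 1 ≤ n) (hp : 0 < p)
    (a : Fin p → Fin n → ℝ) (r : Fin p → ℝ) (hr : ∀ i, 0 < r i) :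
    sInf (Set.range fun x : Fin n → ℝ =>
        ⨆ i, Real.sqrt ((x - a i) ⬝ᵥ (x - a i)) / r i) ≤
      Real.sqrt ((n : ℝ) / (2 * ((n : ℝ) + 1))) *
        (⨆ q : Fin p × Fin p, Real.sqrt ((a q.1 - a q.2) ⬝ᵥ (a q.1 - a q.2))) /
        (⨅ i, r i) ∧
    (0 < (⨆ q : Fin p × Fin p, Real.sqrt ((a q.1 - a q.2) ⬝ᵥ (a q.1 - a q.2))) →
      sInf (Set.range fun x : Fin n → ℝ =>
          ⨆ i, Real.sqrt ((x - a i) ⬝ᵥ (x - a i)) / r i) <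
        (⨆ q : Fin p × Fin p, Real.sqrt ((a q.1 - a q.2) ⬝ᵥ (a q.1 - a q.2))) /
          (Real.sqrt 2 * (⨅ i, r i))) :=
  stmt16_general n p hp a r hr
end
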